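/- arXiv:2210.03839 — 3 statements merged into one kernel-verified Lean document; each statement's English description precedes it below -/
import Mathlib

section
/- Let G be a finite simple graph and k a natural number. Then G has a dominating set of size k if and only if G has a spanning subgraph with exactly |V(G)| − k edges in which every connected component is a star. (Equivalently, G can be turned into a constellation by deleting exactly |E(G)| − |V(G)| + k edges.) -/
/-!
Every constellation is the graph joining each vertex `v` to `f v` for an idempotent map `f`
sending a vertex to the center of its star, and conversely every idempotent `f` yields such a
constellation. Its edges `s(f v, v)` are indexed bijectively by the non-fixed points of `f`, so it
has `|V| - |Fix f|` edges. Finally, `Fix f` dominates `G` exactly when each non-fixed `v` can be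
sent to a neighbour `f v` in `G`, i.e. when the constellation is a subgraph of `G`.
-/

/-- A graph is a *constellation* if every connected component is a star:
each component has a center `c` adjacent to every other vertex of the component,
and every edge inside the component is incident to `c`. -/
def IsConstellation {V : Type*} (H : SimpleGraph V) : Prop :=
  ∀ C : H.ConnectedComponent, ∃ c : V, H.connectedComponentMk c = C ∧
    (∀ v : V, H.connectedComponentMk v = C → v ≠ c → H.Adj c v) ∧
    (∀ u v : V, H.Adj u v → H.connectedComponentMk u = C → (u = c ∨ v = c))

namespace SimpleGraph

variable {V : Type*}

theorem Reachable.apply_eq_of_adj {G : SimpleGraph V} {β : Type*} {g : V → β}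
    (hg : ∀ u v, G.Adj u v → g u = g v) {u v : V} (h : G.Reachable u v) : g u = g v := by
  rw [reachable_iff_reflTransGen] at h
  induction h with
  | refl => rfl
  | tail _ hadj ih => exact ih.trans (hg _ _ hadj)

def fromCenterMap (f : V → V) : SimpleGraph V :=
  fromRel fun v c => c = f v

variable {f : V → V}

@[simp]
theorem fromCenterMap_adj {u v : V} :
    (fromCenterMap f).Adj u v ↔ u ≠ v ∧ (v = f u ∨ u = f v) :=
  fromRel_adj _ _ _

theorem fromCenterMap_adj_apply_of_ne {v : V} (hv : f v ≠ v) :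
    (fromCenterMap f).Adj (f v) v := by
  simp [hv]

theorem fromCenterMap_le_iff {G : SimpleGraph V} :
    fromCenterMap f ≤ G ↔ ∀ v, f v ≠ v → G.Adj (f v) v := by
  refine ⟨fun h v hv => h (fromCenterMap_adj_apply_of_ne hv), ?_⟩
  rintro h u v ⟨huv, rfl | rfl⟩
  · exact (h u huv.symm).symm
  · exact h v huv

theorem edgeSet_fromCenterMap :
    (fromCenterMap f).edgeSet = (fun v => s(f v, v)) '' {v | f v ≠ v} := by
  ext e
  induction e using Sym2.ind with
  | h u v =>
    simp only [mem_edgeSet, fromCenterMap_adj, Set.mem_image, Set.mem_ofPred_eq, Sym2.eq_iff]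
    constructor
    · rintro ⟨huv, rfl | rfl⟩
      · exact ⟨u, huv.symm, Or.inr ⟨rfl, rfl⟩⟩
      · exact ⟨v, huv, Or.inl ⟨rfl, rfl⟩⟩
    · rintro ⟨w, hw, ⟨rfl, rfl⟩ | ⟨rfl, rfl⟩⟩
      · exact ⟨hw, Or.inr rfl⟩
      · exact ⟨hw.symm, Or.inl rfl⟩

theorem ncard_edgeSet_fromCenterMap_add [Finite V] (hf : ∀ v, f (f v) = f v) :
    (fromCenterMap f).edgeSet.ncard + (Function.fixedPoints f).ncard = Nat.card V := by
  have hinj : Set.InjOn (fun v => s(f v, v)) {v | f v ≠ v} := by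
    rintro x hx y - hxy
    rcases Sym2.eq_iff.mp hxy with ⟨-, h⟩ | ⟨-, h⟩
    · exact h
    · exact absurd (by rw [h, hf]) hx
  rw [edgeSet_fromCenterMap, hinj.ncard_image, add_comm]
  exact Set.ncard_add_ncard_compl _

theorem apply_eq_of_fromCenterMap_adj (hf : ∀ v, f (f v) = f v) {u v : V}
    (h : (fromCenterMap f).Adj u v) : f u = f v := by
  rcases fromCenterMap_adj.mp h with ⟨-, rfl | rfl⟩ <;> simp [hf]

theorem isConstellation_fromCenterMap (hf : ∀ v, f (f v) = f v) :
    IsConstellation (fromCenterMap f) := by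
  refine ConnectedComponent.ind fun v => ?_
  have hcomp {w : V} (hw : (fromCenterMap f).connectedComponentMk w =
      (fromCenterMap f).connectedComponentMk v) : f w = f v :=
    (ConnectedComponent.exact hw).apply_eq_of_adj fun _ _ => apply_eq_of_fromCenterMap_adj hf
  refine ⟨f v, ?_, fun w hw hwv => ?_, fun a b hab ha => ?_⟩
  · by_cases hv : f v = v
    · rw [hv]
    · exact ConnectedComponent.connectedComponentMk_eq_of_adj (fromCenterMap_adj_apply_of_ne hv)
  · simp [hcomp hw, Ne.symm hwv]
  · rcases fromCenterMap_adj.mp hab with ⟨-, rfl | rfl⟩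
    · exact Or.inr (hcomp ha)
    · exact Or.inl ((hf b).symm.trans (hcomp ha))

theorem IsConstellation.exists_fromCenterMap_eq {H : SimpleGraph V} (hH : IsConstellation H) :
    ∃ f : V → V, (∀ v, f (f v) = f v) ∧ fromCenterMap f = H := by
  choose c hc_mk hc_adj hc_edge using hH
  let f : V → V := fun v => c (H.connectedComponentMk v)
  refine ⟨f, fun v => by simp only [f, hc_mk], ?_⟩
  ext u v
  rw [fromCenterMap_adj]
  constructor
  · rintro ⟨huv, rfl | rfl⟩
    · exact (hc_adj _ u rfl huv).symm
    · exact hc_adj _ v rfl huv.symm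
  · intro h
    refine ⟨h.ne, ?_⟩
    rcases hc_edge _ u v h rfl with hu | hv
    · right
      rw [hu]
      simp only [f, ConnectedComponent.connectedComponentMk_eq_of_adj h]
    · exact Or.inl hv

theorem exists_fromCenterMap_le_of_dominating {G : SimpleGraph V} {D : Set V}
    (hD : ∀ v ∉ D, ∃ u ∈ D, G.Adj u v) :
    ∃ f : V → V, (∀ v, f (f v) = f v) ∧ Function.fixedPoints f = D ∧
      fromCenterMap f ≤ G := by
  classical
  choose g hgD hgAdj using hD
  let f : V → V := fun v => if h : v ∈ D then v else g v h
  have hfD (v : V) : f v ∈ D := by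
    by_cases h : v ∈ D <;> simp [f, h, hgD]
  have hfix {v : V} (h : v ∈ D) : f v = v := by simp [f, h]
  refine ⟨f, fun v => hfix (hfD v), Set.ext fun v => ⟨fun h => h ▸ hfD v, hfix⟩,
    fromCenterMap_le_iff.mpr fun v hv => ?_⟩
  have h : v ∉ D := fun h => hv (hfix h)
  simpa [f, h] using hgAdj v h

end SimpleGraph

open SimpleGraph

/-- A finite simple graph `G` has a dominating set of size `k` if and only if
`G` has a spanning subgraph with exactly `|V(G)| - k` edges in which every
connected component is a star. -/
theorem dominatingSet_iff_spanning_constellation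
    {V : Type*} [Fintype V] (G : SimpleGraph V) (k : ℕ) :
    (∃ D : Finset V, D.card = k ∧ ∀ v : V, v ∉ D → ∃ u ∈ D, G.Adj u v) ↔
    (∃ H : SimpleGraph V, H ≤ G ∧ H.edgeSet.ncard + k = Fintype.card V ∧
      IsConstellation H) := by
  constructor
  · rintro ⟨D, rfl, hD⟩
    obtain ⟨f, hf, hfix, hle⟩ := exists_fromCenterMap_le_of_dominating (D := (D : Set V)) hD
    refine ⟨fromCenterMap f, hle, ?_, isConstellation_fromCenterMap hf⟩
    have := ncard_edgeSet_fromCenterMap_add hf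
    rwa [hfix, Set.ncard_coe_finset, Nat.card_eq_fintype_card] at this
  · rintro ⟨H, hle, hcard, hH⟩
    obtain ⟨f, hf, rfl⟩ := hH.exists_fromCenterMap_eq
    classical
    refine ⟨(Function.fixedPoints f).toFinset, ?_, fun v hv =>
      ⟨f v, Set.mem_toFinset.mpr (hf v),
        fromCenterMap_le_iff.mp hle v fun h => hv (Set.mem_toFinset.mpr h)⟩⟩
    have := ncard_edgeSet_fromCenterMap_add hf
    rw [Set.ncard_eq_toFinset_card' (Function.fixedPoints f), Nat.card_eq_fintype_card] at this
    omega
end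

section
/- Let G be a finite chordal simple graph and let 𝓔 be a family of 3-element subsets of V(G), each of which induces a triangle in G. Suppose 𝓔 is Berge-acyclic: there is no sequence E_1, x_1, E_2, x_2, …, E_n, x_n with n ≥ 2, where E_1, …, E_n ∈ 𝓔 are pairwise distinct, x_1, …, x_n are pairwise distinct vertices, and x_i ∈ E_i ∩ E_{i+1} for every 1 ≤ i ≤ n (indices modulo n). Let F be the graph on V(G) whose edges are exactly the pairs of vertices contained together in some member of 𝓔. Then every connected component of F is a cactus, and every cycle of F has length exactly 3. -/
/-- A *cycle subgraph*: a connected, 2-regular subgraph. -/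
def IsCycleSubgraph {V : Type*} {G : SimpleGraph V} (C : G.Subgraph) : Prop :=
  C.Connected ∧ ∀ v ∈ C.verts, {u : V | C.Adj v u}.ncard = 2

/-- A *cactus* is a connected graph in which every edge lies in at most one cycle. -/
def IsCactus {V : Type*} (G : SimpleGraph V) : Prop :=
  G.Connected ∧ ∀ (e : Sym2 V) (C₁ C₂ : G.Subgraph),
    IsCycleSubgraph C₁ → IsCycleSubgraph C₂ →
    e ∈ C₁.edgeSet → e ∈ C₂.edgeSet → C₁ = C₂

/-- A graph is *chordal* if every cycle of length greater than 3 has a chord,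
equivalently there is no induced cycle of length greater than 3. -/
def IsChordal {V : Type*} (G : SimpleGraph V) : Prop :=
  ∀ (u : V) (w : G.Walk u u), w.IsCycle → 3 < w.length →
    ∃ a ∈ w.support, ∃ b ∈ w.support, G.Adj a b ∧ s(a, b) ∉ w.edges

section BergeAux
open SimpleGraph

private lemma getVert_eq_support_getElem {V : Type*} {G : SimpleGraph V} :
    ∀ {u v : V} (p : G.Walk u v) (n : ℕ) (hn : n ≤ p.length),
      p.getVert n = p.support[n]'(by rw [SimpleGraph.Walk.length_support]; omega) := by
  intro u v p
  induction p with
  | nil =>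
    intro n hn
    have : n = 0 := by simpa using hn
    subst this
    simp
  | cons h q ih =>
    intro n hn
    cases n with
    | zero => simp
    | succ m =>
      simp only [Walk.getVert_cons_succ, Walk.support_cons, List.getElem_cons_succ]
      exact ih m (by simpa using hn)

private lemma cycle_getVert_inj {V : Type*} {G : SimpleGraph V} {v : V} {c : G.Walk v v}
    (hc : c.IsCycle) {i j : ℕ} (hi : i < c.length) (hj : j < c.length)
    (h : c.getVert i = c.getVert j) : i = j := by
  have hlen := c.length_support
  have htl : c.support.tail.length = c.length := by simp [List.length_tail, hlen]
  have key : ∀ (k : ℕ) (h1 : 1 ≤ k) (h2 : k ≤ c.length),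
      c.getVert k = c.support.tail[k-1]'(by omega) := by
    intro k h1 h2
    rw [List.getElem_tail]
    have : k - 1 + 1 = k := by omega
    simp_rw [this]
    exact getVert_eq_support_getElem c k h2
  have hnd := hc.support_nodup
  rw [List.nodup_iff_injective_getElem] at hnd
  -- map each index into [1, length]
  set ι : ℕ → ℕ := fun k => if k = 0 then c.length else k with hι
  have hgv : ∀ k : ℕ, k < c.length → c.getVert (ι k) = c.getVert k := by
    intro k hk
    by_cases h0 : k = 0
    · subst h0; simp [hι, Walk.getVert_length, Walk.getVert_zero]
    · simp [hι, h0]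
  have hb : ∀ k : ℕ, k < c.length → 1 ≤ ι k ∧ ι k ≤ c.length := by
    intro k hk
    by_cases h0 : k = 0 <;> simp [hι, h0] <;> omega
  have h3 : c.getVert (ι i) = c.getVert (ι j) := by rw [hgv i hi, hgv j hj, h]
  obtain ⟨hi1, hi2⟩ := hb i hi
  obtain ⟨hj1, hj2⟩ := hb j hj
  rw [key _ hi1 hi2, key _ hj1 hj2] at h3
  have := hnd (a₁ := ⟨ι i - 1, by omega⟩) (a₂ := ⟨ι j - 1, by omega⟩) (by simpa using h3)
  have hval : ι i - 1 = ι j - 1 := congrArg Fin.val this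
  have : ι i = ι j := by omega
  by_cases h0i : i = 0 <;> by_cases h0j : j = 0 <;>
    simp [hι, h0i, h0j] at this <;> omega

private lemma chain_const {V : Type*} (𝓔 : Set (Finset V))
    (hBerge : ¬ ∃ (n : ℕ) (hn : 2 ≤ n) (E : Fin n → Finset V) (x : Fin n → V),
      (∀ i, E i ∈ 𝓔) ∧ Function.Injective E ∧ Function.Injective x ∧
      ∀ i : Fin n, x i ∈ E i ∧ x i ∈ E ⟨(i.val + 1) % n, Nat.mod_lt _ (Nat.lt_of_lt_of_le Nat.zero_lt_two hn)⟩) :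
    ∀ (n : ℕ) (hn : 2 ≤ n) (E : Fin n → Finset V) (x : Fin n → V),
      (∀ i, E i ∈ 𝓔) → Function.Injective x →
      (∀ i : Fin n, x i ∈ E i ∧ x i ∈ E ⟨(i.val + 1) % n, Nat.mod_lt _ (Nat.lt_of_lt_of_le Nat.zero_lt_two hn)⟩) →
      ∀ i j, E i = E j := by
  intro n
  induction n using Nat.strong_induction_on with
  | _ n IH =>
  intro hn E x hE hx hchain
  have hn1 : 0 < n := by omega
  set nsucc : Fin n → Fin n := fun i => ⟨(i.val + 1) % n, Nat.mod_lt _ hn1⟩ with hnsucc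
  have hchain' : ∀ i : Fin n, x i ∈ E i ∧ x i ∈ E (nsucc i) := hchain
  set σ : ℕ → Fin n → Fin n := fun c i => ⟨(i.val + c) % n, Nat.mod_lt _ hn1⟩ with hσ
  have hσsucc : ∀ (c : ℕ) (i : Fin n), nsucc (σ c i) = σ c (nsucc i) := by
    intro c i
    apply Fin.ext
    show ((i.val + c) % n + 1) % n = ((i.val + 1) % n + c) % n
    rw [Nat.mod_add_mod, Nat.mod_add_mod]
    congr 1
    omega
  have hσinj : ∀ c : ℕ, Function.Injective (σ c) := by
    intro c a b hab
    have h1 : (a.val + c) % n = (b.val + c) % n := congrArg Fin.val hab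
    have h2 : a.val % n = b.val % n := (Nat.ModEq.add_right_cancel' c h1)
    apply Fin.ext
    rwa [Nat.mod_eq_of_lt a.isLt, Nat.mod_eq_of_lt b.isLt] at h2
  by_cases hcons : ∃ i, E i = E (nsucc i)
  · obtain ⟨i₀, hi₀⟩ := hcons
    set c := i₀.val with hc
    set E' : Fin n → Finset V := fun k => E (σ c k) with hE'
    set x' : Fin n → V := fun k => x (σ c k) with hx'
    have hchain'' : ∀ i : Fin n, x' i ∈ E' i ∧ x' i ∈ E' (nsucc i) := by
      intro i
      refine ⟨(hchain' (σ c i)).1, ?_⟩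
      have := (hchain' (σ c i)).2
      rwa [hσsucc c i] at this
    have hσ0 : σ c ⟨0, hn1⟩ = i₀ := by
      apply Fin.ext
      show (0 + c) % n = i₀.val
      rw [Nat.zero_add, Nat.mod_eq_of_lt i₀.isLt]
    have hE'01 : E' ⟨0, hn1⟩ = E' ⟨1, by omega⟩ := by
      have h1 : nsucc ⟨0, hn1⟩ = ⟨1, by omega⟩ := by
        apply Fin.ext
        show (0 + 1) % n = 1
        rw [Nat.mod_eq_of_lt (by omega)]
      show E (σ c ⟨0, hn1⟩) = E (σ c ⟨1, by omega⟩)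
      rw [← h1, ← hσsucc, hσ0]
      exact hi₀
    suffices h : ∀ a b, E' a = E' b by
      intro i j
      have hsurj : Function.Surjective (σ c) :=
        Finite.surjective_of_injective (hσinj c)
      obtain ⟨a, ha⟩ := hsurj i
      obtain ⟨b, hb⟩ := hsurj j
      rw [← ha, ← hb]
      exact h a b
    rcases eq_or_lt_of_le hn with h2 | h3
    · -- n = 2
      intro a b
      have hcase : ∀ k : Fin n, k = ⟨0, hn1⟩ ∨ k = ⟨1, by omega⟩ := by
        intro k
        have hk := k.isLt
        rcases Nat.lt_or_ge k.val 1 with h | h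
        · left
          apply Fin.ext
          show k.val = 0
          omega
        · right
          apply Fin.ext
          show k.val = 1
          omega
      rcases hcase a with ha | ha <;> rcases hcase b with hb | hb <;> rw [ha, hb]
      · exact hE'01
      · exact hE'01.symm
    · -- n ≥ 3, contract index 1
      set m := n - 1 with hm
      have hm2 : 2 ≤ m := by omega
      have hmn : m < n := by omega
      set g : Fin m → Fin n := fun k => ⟨k.val + 1, by omega⟩ with hg
      set E₂ : Fin m → Finset V := fun k => E' (g k) with hE₂
      set x₂ : Fin m → V := fun k => x' (g k) with hx₂
      have hchain₂ : ∀ k : Fin m, x₂ k ∈ E₂ k ∧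
          x₂ k ∈ E₂ ⟨(k.val + 1) % m, Nat.mod_lt _ (by omega)⟩ := by
        intro k
        obtain ⟨hA, hB⟩ := hchain'' (g k)
        refine ⟨hA, ?_⟩
        rcases Nat.lt_or_ge (k.val + 1) m with hlt | hge
        · have heq : g ⟨(k.val + 1) % m, Nat.mod_lt _ (by omega)⟩ = nsucc (g k) := by
            apply Fin.ext
            show (k.val + 1) % m + 1 = (k.val + 1 + 1) % n
            rw [Nat.mod_eq_of_lt hlt, Nat.mod_eq_of_lt (by omega)]
          show x' (g k) ∈ E' (g ⟨(k.val + 1) % m, Nat.mod_lt _ (by omega)⟩)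
          rw [heq]
          exact hB
        · -- k.val + 1 = m
          have hk : k.val + 1 = m := by have := k.isLt; omega
          have h1 : (⟨(k.val + 1) % m, Nat.mod_lt _ (by omega)⟩ : Fin m) = ⟨0, by omega⟩ := by
            apply Fin.ext
            show (k.val + 1) % m = 0
            rw [hk, Nat.mod_self]
          show x' (g k) ∈ E' (g ⟨(k.val + 1) % m, Nat.mod_lt _ (by omega)⟩)
          rw [h1]
          have h2 : g ⟨0, by omega⟩ = ⟨1, by omega⟩ := by apply Fin.ext; rfl
          rw [h2, ← hE'01]
          have h3 : nsucc (g k) = ⟨0, hn1⟩ := by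
            apply Fin.ext
            show (k.val + 1 + 1) % n = 0
            have : k.val + 1 + 1 = n := by omega
            rw [this, Nat.mod_self]
          rwa [h3] at hB
      have hx₂ : Function.Injective x₂ := by
        intro a b hab
        have h1 : σ c (g a) = σ c (g b) := hx hab
        have h2 := hσinj c h1
        have hval := congrArg Fin.val h2
        apply Fin.ext
        exact Nat.succ_injective hval
      have hconst := IH m hmn hm2 E₂ x₂ (fun k => hE _) hx₂ hchain₂
      intro a b
      have claim : ∀ k : Fin n, E' k = E₂ ⟨0, by omega⟩ := by
        intro k
        by_cases hk0 : k.val = 0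
        · have hk0' : k = ⟨0, hn1⟩ := Fin.ext hk0
          rw [hk0']
          exact hE'01.trans rfl
        · have hk : k = g ⟨k.val - 1, by omega⟩ := by
            apply Fin.ext
            show k.val = k.val - 1 + 1
            omega
          rw [hk]
          exact hconst ⟨k.val - 1, by omega⟩ ⟨0, by omega⟩
      rw [claim a, claim b]
  · push_neg at hcons
    by_cases hinjE : Function.Injective E
    · exact absurd ⟨n, hn, E, x, hE, hinjE, hx, hchain⟩ hBerge
    · exfalso
      obtain ⟨a, b, hEab, hab⟩ := Function.not_injective_iff.mp hinjE
      set c := a.val with hc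
      have hca : σ c ⟨0, hn1⟩ = a := by
        apply Fin.ext
        show (0 + c) % n = a.val
        rw [Nat.zero_add, Nat.mod_eq_of_lt a.isLt]
      set j' : Fin n := ⟨(b.val + n - c) % n, Nat.mod_lt _ hn1⟩ with hj'
      have hσj' : σ c j' = b := by
        apply Fin.ext
        show ((b.val + n - c) % n + c) % n = b.val
        rw [Nat.mod_add_mod]
        have h1 : b.val + n - c + c = b.val + n := by
          have := a.isLt; omega
        rw [h1, Nat.add_mod_right, Nat.mod_eq_of_lt b.isLt]
      set E' : Fin n → Finset V := fun k => E (σ c k) with hE'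
      set x' : Fin n → V := fun k => x (σ c k) with hx'
      have hchain'' : ∀ i : Fin n, x' i ∈ E' i ∧ x' i ∈ E' (nsucc i) := by
        intro i
        refine ⟨(hchain' (σ c i)).1, ?_⟩
        have := (hchain' (σ c i)).2
        rwa [hσsucc c i] at this
      have hcons' : ∀ i : Fin n, E' i ≠ E' (nsucc i) := by
        intro i h
        have h2 : E (σ c i) = E (nsucc (σ c i)) := by
          rw [hσsucc]; exact h
        exact hcons (σ c i) h2
      have hE'0j : E' ⟨0, hn1⟩ = E' j' := by
        show E (σ c ⟨0, hn1⟩) = E (σ c j')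
        rw [hca, hσj']
        exact hEab
      have hj'0 : j'.val ≠ 0 := by
        intro h
        have h1 : j' = ⟨0, hn1⟩ := Fin.ext h
        rw [h1, hca] at hσj'
        exact hab hσj'
      have hns0 : nsucc ⟨0, hn1⟩ = ⟨1, by omega⟩ := by
        apply Fin.ext
        show (0 + 1) % n = 1
        rw [Nat.mod_eq_of_lt (by omega)]
      have hj'1 : j'.val ≠ 1 := by
        intro h
        have : j' = ⟨1, by omega⟩ := Fin.ext h
        rw [this, ← hns0] at hE'0j
        exact hcons' ⟨0, hn1⟩ hE'0j
      set m := j'.val with hmdef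
      have hm2 : 2 ≤ m := by
        have := j'.isLt
        omega
      have hmn : m < n := j'.isLt
      set E₃ : Fin m → Finset V := fun k => E' ⟨k.val, by omega⟩ with hE₃
      set x₃ : Fin m → V := fun k => x' ⟨k.val, by omega⟩ with hx₃
      have hchain₃ : ∀ k : Fin m, x₃ k ∈ E₃ k ∧
          x₃ k ∈ E₃ ⟨(k.val + 1) % m, Nat.mod_lt _ (by omega)⟩ := by
        intro k
        obtain ⟨hA, hB⟩ := hchain'' ⟨k.val, by omega⟩
        refine ⟨hA, ?_⟩
        rcases Nat.lt_or_ge (k.val + 1) m with hlt | hge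
        · have heq : (⟨((⟨(k.val + 1) % m, Nat.mod_lt _ (by omega)⟩ : Fin m)).val, by omega⟩ : Fin n)
              = nsucc ⟨k.val, by omega⟩ := by
            apply Fin.ext
            show (k.val + 1) % m = (k.val + 1) % n
            rw [Nat.mod_eq_of_lt hlt, Nat.mod_eq_of_lt (by omega)]
          show x' _ ∈ E' _
          rw [heq]
          exact hB
        · have hk : k.val + 1 = m := by have := k.isLt; omega
          have h1 : ((⟨(k.val + 1) % m, Nat.mod_lt _ (by omega)⟩ : Fin m)).val = 0 := by
            show (k.val + 1) % m = 0
            rw [hk, Nat.mod_self]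
          show x' _ ∈ E' ⟨((⟨(k.val + 1) % m, Nat.mod_lt _ (by omega)⟩ : Fin m)).val, by omega⟩
          have h2 : (⟨((⟨(k.val + 1) % m, Nat.mod_lt _ (by omega)⟩ : Fin m)).val, by omega⟩ : Fin n)
              = ⟨0, hn1⟩ := Fin.ext h1
          rw [h2, hE'0j]
          have h3 : nsucc ⟨k.val, by omega⟩ = j' := by
            apply Fin.ext
            show (k.val + 1) % n = j'.val
            rw [hk]
            exact Nat.mod_eq_of_lt hmn
          rwa [h3] at hB
      have hx₃ : Function.Injective x₃ := by
        intro u w huw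
        have h1 : σ c ⟨u.val, by omega⟩ = σ c ⟨w.val, by omega⟩ := hx huw
        have h2 := hσinj c h1
        have hval := congrArg Fin.val h2
        exact Fin.ext (by simpa using hval)
      have hconst := IH m hmn hm2 E₃ x₃ (fun k => hE _) hx₃ hchain₃
      have h01 := hconst ⟨0, by omega⟩ ⟨1, by omega⟩
      rw [hE₃] at h01
      have : E' ⟨0, hn1⟩ = E' ⟨1, by omega⟩ := h01
      rw [← hns0] at this
      exact hcons' ⟨0, hn1⟩ this

private lemma cycleSubgraph_triangle {V : Type*} [Fintype V]
    (𝓔 : Set (Finset V))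
    (hcard : ∀ e ∈ 𝓔, e.card = 3)
    (hBerge : ¬ ∃ (n : ℕ) (hn : 2 ≤ n) (E : Fin n → Finset V) (x : Fin n → V),
      (∀ i, E i ∈ 𝓔) ∧ Function.Injective E ∧ Function.Injective x ∧
      ∀ i : Fin n, x i ∈ E i ∧ x i ∈ E ⟨(i.val + 1) % n, Nat.mod_lt _ (Nat.lt_of_lt_of_le Nat.zero_lt_two hn)⟩)
    (F : SimpleGraph V)
    (hF : ∀ u v : V, F.Adj u v ↔ u ≠ v ∧ ∃ e ∈ 𝓔, u ∈ e ∧ v ∈ e)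
    (D : F.Subgraph) (hD : IsCycleSubgraph D) :
    ∃ e ∈ 𝓔, D.verts = ↑e ∧ ∀ a b : V, D.Adj a b ↔ a ∈ D.verts ∧ b ∈ D.verts ∧ a ≠ b := by
  classical
  obtain ⟨hconn, hdeg⟩ := hD
  -- every vertex of `D.coe` has degree 2
  have hdeg' : ∀ v : D.verts, D.coe.degree v = 2 := by
    intro v
    have h2 : {u : V | D.Adj ↑v u}.ncard = 2 := hdeg ↑v v.2
    have himg : Subtype.val '' (D.coe.neighborSet v) = {u : V | D.Adj ↑v u} := by
      ext u
      simp only [Set.mem_image, SimpleGraph.mem_neighborSet, SimpleGraph.Subgraph.coe_adj,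
        Set.mem_setOf_eq]
      constructor
      · rintro ⟨w, hw, rfl⟩; exact hw
      · intro h; exact ⟨⟨u, h.snd_mem⟩, h, rfl⟩
    rw [← himg, Set.ncard_image_of_injective _ Subtype.val_injective] at h2
    rw [← SimpleGraph.card_neighborSet_eq_degree]
    rw [← Nat.card_coe_set_eq, Nat.card_eq_fintype_card] at h2
    exact h2
  -- D.coe is not acyclic
  have hnotacyclic : ¬ D.coe.IsAcyclic := by
    intro hacyc
    have htree : D.coe.IsTree := ⟨hconn, hacyc⟩
    have hcardE := htree.card_edgeFinset
    have hdeg'' : ∀ (v : ↑D.verts) (inst : Fintype ((D.coe).neighborSet v)),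
        @SimpleGraph.degree _ D.coe v inst = 2 := by
      intro v inst
      have h := hdeg' v
      convert h using 2
    have hsum := SimpleGraph.sum_degrees_eq_twice_card_edges D.coe
    simp only [hdeg''] at hsum
    rw [Finset.sum_const, Finset.card_univ, smul_eq_mul] at hsum
    omega
  obtain ⟨v, c, hcyc⟩ : ∃ (v : D.verts) (c : D.coe.Walk v v), c.IsCycle := by
    by_contra h
    push_neg at h
    exact hnotacyclic fun v c => h v c
  have hL3 : 3 ≤ c.length := hcyc.three_le_length
  have hL0 : 0 < c.length := by omega
  set L := c.length with hLdef
  set vs : Fin L → V := fun i => ↑(c.getVert i.val) with hvs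
  have hvsinj : Function.Injective vs := by
    intro i j h
    exact Fin.ext (cycle_getVert_inj hcyc i.isLt j.isLt (Subtype.val_injective h))
  set nsucc : Fin L → Fin L := fun i => ⟨(i.val + 1) % L, Nat.mod_lt _ hL0⟩ with hnsucc
  have hadj : ∀ i : Fin L, D.Adj (vs i) (vs (nsucc i)) := by
    intro i
    have hadj' := c.adj_getVert_succ i.isLt
    rcases Nat.lt_or_ge (i.val + 1) L with h | h
    · have h1 : nsucc i = ⟨i.val + 1, h⟩ := Fin.ext (Nat.mod_eq_of_lt h)
      rw [h1]
      exact hadj'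
    · have hiL : i.val + 1 = L := by have := i.isLt; omega
      have h1 : nsucc i = ⟨0, hL0⟩ := by
        apply Fin.ext
        show (i.val + 1) % L = 0
        rw [hiL, Nat.mod_self]
      rw [h1]
      show D.Adj ↑(c.getVert i.val) ↑(c.getVert 0)
      have h2 : c.getVert (i.val + 1) = c.getVert 0 := by
        rw [hiL, SimpleGraph.Walk.getVert_length, SimpleGraph.Walk.getVert_zero]
      rw [← h2]
      exact hadj'
  have hFadj : ∀ i : Fin L, ∃ e ∈ 𝓔, vs i ∈ e ∧ vs (nsucc i) ∈ e := by
    intro i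
    have h := D.adj_sub (hadj i)
    rw [hF] at h
    exact h.2
  choose Ed hEd hEd1 hEd2 using hFadj
  have hnsuccinj : Function.Injective nsucc := by
    intro a b h
    have hval : (a.val + 1) % L = (b.val + 1) % L := congrArg Fin.val h
    have ha := a.isLt
    have hb := b.isLt
    apply Fin.ext
    rcases Nat.lt_or_ge (a.val + 1) L with h1 | h1 <;>
      rcases Nat.lt_or_ge (b.val + 1) L with h2 | h2
    · rw [Nat.mod_eq_of_lt h1, Nat.mod_eq_of_lt h2] at hval; omega
    · have hb' : b.val + 1 = L := by omega
      rw [Nat.mod_eq_of_lt h1, hb', Nat.mod_self] at hval; omega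
    · have ha' : a.val + 1 = L := by omega
      rw [ha', Nat.mod_self, Nat.mod_eq_of_lt h2] at hval; omega
    · omega
  set x : Fin L → V := fun i => vs (nsucc i) with hxdef
  have hxinj : Function.Injective x := hvsinj.comp hnsuccinj
  have hchain : ∀ i : Fin L, x i ∈ Ed i ∧ x i ∈ Ed ⟨(i.val + 1) % L, Nat.mod_lt _ (by omega)⟩ := by
    intro i
    exact ⟨hEd2 i, hEd1 (nsucc i)⟩
  have hconst := chain_const 𝓔 hBerge L (by omega) Ed x hEd hxinj hchain
  set e := Ed ⟨0, hL0⟩ with hedef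
  have he : e ∈ 𝓔 := hEd _
  have hmem : ∀ i : Fin L, vs i ∈ e := by
    intro i
    have h1 := hEd1 i
    rw [hconst i ⟨0, hL0⟩] at h1
    exact h1
  have hL : L = 3 := by
    have h1 : (Finset.univ : Finset (Fin L)).card ≤ e.card :=
      Finset.card_le_card_of_injOn vs (fun i _ => hmem i) hvsinj.injOn
    rw [Finset.card_univ, Fintype.card_fin, hcard e he] at h1
    omega
  set u0 := vs ⟨0, hL0⟩ with hu0def
  set u1 := vs ⟨1, by omega⟩ with hu1def
  set u2 := vs ⟨2, by omega⟩ with hu2def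
  have h01 : D.Adj u0 u1 := by
    have := hadj ⟨0, hL0⟩
    have hns : nsucc ⟨0, hL0⟩ = ⟨1, by omega⟩ := by
      apply Fin.ext
      show (0 + 1) % L = 1
      rw [Nat.mod_eq_of_lt (by omega)]
    rwa [hns] at this
  have h12 : D.Adj u1 u2 := by
    have := hadj ⟨1, by omega⟩
    have hns : nsucc ⟨1, by omega⟩ = ⟨2, by omega⟩ := by
      apply Fin.ext
      show (1 + 1) % L = 2
      rw [Nat.mod_eq_of_lt (by omega)]
    rwa [hns] at this
  have h20 : D.Adj u2 u0 := by
    have := hadj ⟨2, by omega⟩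
    have hns : nsucc ⟨2, by omega⟩ = ⟨0, hL0⟩ := by
      apply Fin.ext
      show (2 + 1) % L = 0
      rw [hL]
    rwa [hns] at this
  have hne01 : u0 ≠ u1 := fun h => by
    have := hvsinj h
    simp [Fin.ext_iff] at this
  have hne02 : u0 ≠ u2 := fun h => by
    have := hvsinj h
    simp [Fin.ext_iff] at this
  have hne12 : u1 ≠ u2 := fun h => by
    have := hvsinj h
    simp [Fin.ext_iff] at this
  have hu0e : u0 ∈ e := hmem _
  have hu1e : u1 ∈ e := hmem _
  have hu2e : u2 ∈ e := hmem _
  have heq : e = {u0, u1, u2} := by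
    symm
    apply Finset.eq_of_subset_of_card_le
    · intro z hz
      simp only [Finset.mem_insert, Finset.mem_singleton] at hz
      rcases hz with rfl | rfl | rfl
      · exact hu0e
      · exact hu1e
      · exact hu2e
    · rw [hcard e he]
      rw [Finset.card_insert_of_notMem (by simp [hne01, hne02]),
        Finset.card_insert_of_notMem (by simp [hne12]), Finset.card_singleton]
  -- neighbor sets
  have hnbr : ∀ a b c' : V, b ≠ c' → D.Adj a b → D.Adj a c' → {u : V | D.Adj a u} = {b, c'} := by
    intro a b c' hbc hab hac
    have hmemv : a ∈ D.verts := hab.fst_mem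
    symm
    apply Set.eq_of_subset_of_ncard_le
    · intro z hz
      rcases hz with rfl | hz
      · exact hab
      · rw [Set.mem_singleton_iff] at hz; subst hz; exact hac
    · rw [hdeg a hmemv, Set.ncard_pair hbc]
    · exact Set.toFinite _
  have N0 : {u : V | D.Adj u0 u} = {u1, u2} := hnbr u0 u1 u2 hne12 h01 h20.symm
  have N1 : {u : V | D.Adj u1 u} = {u2, u0} := hnbr u1 u2 u0 (Ne.symm hne02) h12 h01.symm
  have N2 : {u : V | D.Adj u2 u} = {u0, u1} := hnbr u2 u0 u1 hne01 h20 h12.symm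
  have hverts : D.verts = ({u0, u1, u2} : Set V) := by
    apply Set.eq_of_subset_of_subset
    · intro z hz
      have hreach := hconn.preconnected ⟨u0, h01.fst_mem⟩ ⟨z, hz⟩
      obtain ⟨w⟩ := hreach
      have hstep : ∀ (s t : D.verts) (w : D.coe.Walk s t),
          (s : V) ∈ ({u0, u1, u2} : Set V) → (t : V) ∈ ({u0, u1, u2} : Set V) := by
        intro s t w
        induction w with
        | nil => exact id
        | @cons s' m' t' ha p ih =>
          intro hs
          apply ih
          have hDm : D.Adj ↑s' ↑m' := ha
          rcases hs with hs | hs | hs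
          · have hm : (m' : V) ∈ {u : V | D.Adj u0 u} := by rw [← hs]; exact hDm
            rw [N0] at hm
            rcases hm with h | h
            · right; left; exact h
            · right; right; exact h
          · have hm : (m' : V) ∈ {u : V | D.Adj u1 u} := by rw [← hs]; exact hDm
            rw [N1] at hm
            rcases hm with h | h
            · right; right; exact h
            · left; exact h
          · have hm : (m' : V) ∈ {u : V | D.Adj u2 u} := by rw [← hs]; exact hDm
            rw [N2] at hm
            rcases hm with h | h
            · left; exact h
            · right; left; exact h
      exact hstep _ _ w (by left; rfl)
    · intro z hz
      rcases hz with rfl | hz | hz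
      · exact h01.fst_mem
      · exact hz ▸ h01.snd_mem
      · exact hz ▸ h20.fst_mem
  refine ⟨e, he, ?_, ?_⟩
  · rw [hverts, heq]
    simp
  · intro a b
    constructor
    · intro h
      exact ⟨h.fst_mem, h.snd_mem, h.ne⟩
    · rintro ⟨ha, hb, hab⟩
      rw [hverts] at ha hb
      rcases ha with ha | ha | ha <;> rcases hb with hb | hb | hb <;>
        subst ha <;> subst hb
      · exact absurd rfl hab
      · exact h01
      · exact h20.symm
      · exact h01.symm
      · exact absurd rfl hab
      · exact h12
      · exact h20
      · exact h12.symm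
      · exact absurd rfl hab

private def valHom {V : Type*} (F : SimpleGraph V) (s : Set V) : F.induce s →g F :=
  ⟨Subtype.val, fun {a b} h => h⟩

private lemma map_adj_val {V : Type*} {F : SimpleGraph V} {s : Set V}
    (C : (F.induce s).Subgraph) (a b : s) :
    (C.map (valHom F s)).Adj ↑a ↑b ↔ C.Adj a b := by
  constructor
  · rintro ⟨a', b', h, ha, hb⟩
    have ha' : a' = a := Subtype.val_injective ha
    have hb' : b' = b := Subtype.val_injective hb
    subst ha'; subst hb'; exact h
  · intro h
    exact ⟨a, b, h, rfl, rfl⟩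

private lemma map_cycleSubgraph {V : Type*} {F : SimpleGraph V} {s : Set V}
    (C : (F.induce s).Subgraph) (hC : IsCycleSubgraph C) :
    IsCycleSubgraph (C.map (valHom F s)) := by
  obtain ⟨hconn, hdeg⟩ := hC
  constructor
  · rw [SimpleGraph.Subgraph.connected_iff']
    rw [SimpleGraph.Subgraph.connected_iff'] at hconn
    have hiso : C.coe ≃g (C.map (valHom F s)).coe := by
      refine ⟨Equiv.Set.image Subtype.val C.verts Subtype.val_injective, ?_⟩
      intro a b
      exact (map_adj_val C a.1 b.1)
    exact (SimpleGraph.Iso.connected_iff hiso).mp hconn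
  · intro v hv
    obtain ⟨a, ha, rfl⟩ := hv
    have himg : {u : V | (C.map (valHom F s)).Adj ((valHom F s) a) u}
        = Subtype.val '' {b : s | C.Adj a b} := by
      ext z
      constructor
      · rintro ⟨a', b', h, ha', hb'⟩
        have h1 : a' = a := Subtype.val_injective ha'
        subst h1
        exact ⟨b', h, hb'⟩
      · rintro ⟨b', h, rfl⟩
        exact ⟨a, b', h, rfl, rfl⟩
    rw [himg, Set.ncard_image_of_injective _ Subtype.val_injective]
    exact hdeg a ha

private lemma map_val_inj {V : Type*} {F : SimpleGraph V} {s : Set V}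
    {C₁ C₂ : (F.induce s).Subgraph}
    (h : C₁.map (valHom F s) = C₂.map (valHom F s)) : C₁ = C₂ := by
  apply SimpleGraph.Subgraph.ext
  · have hv := congrArg SimpleGraph.Subgraph.verts h
    simp only [SimpleGraph.Subgraph.map_verts] at hv
    exact Set.image_injective.mpr Subtype.val_injective hv
  · funext a b
    apply propext
    rw [← map_adj_val C₁ a b, ← map_adj_val C₂ a b, h]

private lemma vec2_injective {α : Type*} {a b : α} (h : a ≠ b) :
    Function.Injective ![a, b] := by
  intro i j hij
  fin_cases i <;> fin_cases j
  · rfl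
  · simp only [Matrix.cons_val_zero, Matrix.cons_val_one, Matrix.head_cons] at hij
    exact absurd hij h
  · simp only [Matrix.cons_val_zero, Matrix.cons_val_one, Matrix.head_cons] at hij
    exact absurd hij h.symm
  · rfl

private lemma hyperedge_unique {V : Type*} {𝓔 : Set (Finset V)}
    (hBerge : ¬ ∃ (n : ℕ) (hn : 2 ≤ n) (E : Fin n → Finset V) (x : Fin n → V),
      (∀ i, E i ∈ 𝓔) ∧ Function.Injective E ∧ Function.Injective x ∧
      ∀ i : Fin n, x i ∈ E i ∧ x i ∈ E ⟨(i.val + 1) % n, Nat.mod_lt _ (Nat.lt_of_lt_of_le Nat.zero_lt_two hn)⟩)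
    {e f : Finset V} (he : e ∈ 𝓔) (hf : f ∈ 𝓔)
    {u v : V} (huv : u ≠ v) (hue : u ∈ e) (huf : u ∈ f) (hve : v ∈ e) (hvf : v ∈ f) :
    e = f := by
  by_contra hef
  apply hBerge
  refine ⟨2, le_refl 2, ![e, f], ![u, v], ?_, ?_, ?_, ?_⟩
  · intro i; fin_cases i <;> simpa
  · exact vec2_injective hef
  · exact vec2_injective huv
  · intro i
    fin_cases i
    · exact ⟨hue, huf⟩
    · exact ⟨hvf, hve⟩

private lemma cycleSubgraphs_eq_of_common_edge {V : Type*} [Fintype V]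
    (𝓔 : Set (Finset V))
    (hcard : ∀ e ∈ 𝓔, e.card = 3)
    (hBerge : ¬ ∃ (n : ℕ) (hn : 2 ≤ n) (E : Fin n → Finset V) (x : Fin n → V),
      (∀ i, E i ∈ 𝓔) ∧ Function.Injective E ∧ Function.Injective x ∧
      ∀ i : Fin n, x i ∈ E i ∧ x i ∈ E ⟨(i.val + 1) % n, Nat.mod_lt _ (Nat.lt_of_lt_of_le Nat.zero_lt_two hn)⟩)
    (F : SimpleGraph V)
    (hF : ∀ u v : V, F.Adj u v ↔ u ≠ v ∧ ∃ e ∈ 𝓔, u ∈ e ∧ v ∈ e)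
    (D₁ D₂ : F.Subgraph) (h1 : IsCycleSubgraph D₁) (h2 : IsCycleSubgraph D₂)
    {a b : V} (ha1 : D₁.Adj a b) (ha2 : D₂.Adj a b) : D₁ = D₂ := by
  obtain ⟨e₁, he₁, hv₁, hadj₁⟩ := cycleSubgraph_triangle 𝓔 hcard hBerge F hF D₁ h1
  obtain ⟨e₂, he₂, hv₂, hadj₂⟩ := cycleSubgraph_triangle 𝓔 hcard hBerge F hF D₂ h2
  have hab : a ≠ b := ha1.ne
  have hae1 : a ∈ e₁ := by
    have h := ha1.fst_mem; rw [hv₁] at h; exact h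
  have hbe1 : b ∈ e₁ := by
    have h := ha1.snd_mem; rw [hv₁] at h; exact h
  have hae2 : a ∈ e₂ := by
    have h := ha2.fst_mem; rw [hv₂] at h; exact h
  have hbe2 : b ∈ e₂ := by
    have h := ha2.snd_mem; rw [hv₂] at h; exact h
  have he : e₁ = e₂ := hyperedge_unique hBerge he₁ he₂ hab hae1 hae2 hbe1 hbe2
  apply SimpleGraph.Subgraph.ext
  · rw [hv₁, hv₂, he]
  · funext x y
    apply propext
    rw [hadj₁, hadj₂, hv₁, hv₂, he]

end BergeAux

/-- Let `G` be a finite chordal graph and `𝓔` a Berge-acyclic family of 3-element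
vertex sets, each inducing a triangle in `G`.  If `F` is the graph whose edges are
exactly the pairs of distinct vertices contained together in some member of `𝓔`,
then every connected component of `F` is a cactus and every cycle of `F` has
length exactly 3. -/
theorem bergeAcyclic_triangle_hypergraph_gives_cacti {V : Type*} [Fintype V]
    (G : SimpleGraph V) (hchordal : IsChordal G)
    (𝓔 : Set (Finset V))
    (hcard : ∀ e ∈ 𝓔, e.card = 3)
    (htri : ∀ e ∈ 𝓔, ∀ u ∈ e, ∀ v ∈ e, u ≠ v → G.Adj u v)
    (hBerge : ¬ ∃ (n : ℕ) (hn : 2 ≤ n) (E : Fin n → Finset V) (x : Fin n → V),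
      (∀ i, E i ∈ 𝓔) ∧ Function.Injective E ∧ Function.Injective x ∧
      ∀ i : Fin n, x i ∈ E i ∧ x i ∈ E ⟨(i.val + 1) % n, Nat.mod_lt _ (by omega)⟩)
    (F : SimpleGraph V)
    (hF : ∀ u v : V, F.Adj u v ↔ u ≠ v ∧ ∃ e ∈ 𝓔, u ∈ e ∧ v ∈ e) :
    (∀ C : F.ConnectedComponent, IsCactus (F.induce C.supp)) ∧
    (∀ C : F.Subgraph, IsCycleSubgraph C → C.edgeSet.ncard = 3) := by
  constructor
  · intro C
    constructor
    · -- connectivity of the component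
      rw [SimpleGraph.connected_iff]
      constructor
      · intro a b
        have ha : (a : V) ∈ C.supp := a.2
        have hb : (b : V) ∈ C.supp := b.2
        rw [SimpleGraph.ConnectedComponent.mem_supp_iff] at ha hb
        have hr : F.Reachable ↑a ↑b :=
          SimpleGraph.ConnectedComponent.eq.mp (ha.trans hb.symm)
        obtain ⟨w⟩ := hr
        have key : ∀ (u z : V) (w : F.Walk u z) (hu : u ∈ C.supp),
            ∃ hz : z ∈ C.supp, (F.induce C.supp).Reachable ⟨u, hu⟩ ⟨z, hz⟩ := by
          intro u z w
          induction w with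
          | nil => intro hu; exact ⟨hu, SimpleGraph.Reachable.refl _⟩
          | @cons u' m' z' hadj p ih =>
            intro hu
            have hm : m' ∈ C.supp := by
              rw [SimpleGraph.ConnectedComponent.mem_supp_iff] at hu ⊢
              rw [← hu]
              exact SimpleGraph.ConnectedComponent.eq.mpr hadj.symm.reachable
            obtain ⟨hz, hr'⟩ := ih hm
            refine ⟨hz, SimpleGraph.Reachable.trans ?_ hr'⟩
            have hadj' : (F.induce C.supp).Adj ⟨u', hu⟩ ⟨m', hm⟩ := hadj
            exact hadj'.reachable
        obtain ⟨hz, hr'⟩ := key ↑a ↑b w a.2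
        exact hr'
      · obtain ⟨v0, hv0⟩ := Quot.exists_rep C
        exact ⟨⟨v0, by rw [SimpleGraph.ConnectedComponent.mem_supp_iff]; exact hv0⟩⟩
    · -- uniqueness of cycles through an edge
      intro ε C₁ C₂ hC₁ hC₂ hε₁ hε₂
      revert hε₁ hε₂
      induction ε using Sym2.ind with
      | _ a b =>
      intro hε₁ hε₂
      have ha1 : C₁.Adj a b := hε₁
      have ha2 : C₂.Adj a b := hε₂
      have hD1 := map_cycleSubgraph C₁ hC₁
      have hD2 := map_cycleSubgraph C₂ hC₂
      have hm1 : (C₁.map (valHom F C.supp)).Adj ↑a ↑b := (map_adj_val C₁ a b).mpr ha1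
      have hm2 : (C₂.map (valHom F C.supp)).Adj ↑a ↑b := (map_adj_val C₂ a b).mpr ha2
      exact map_val_inj
        (cycleSubgraphs_eq_of_common_edge 𝓔 hcard hBerge F hF _ _ hD1 hD2 hm1 hm2)
  · intro D hD
    classical
    obtain ⟨e, he, hv, hadj⟩ := cycleSubgraph_triangle 𝓔 hcard hBerge F hF D hD
    obtain ⟨u0, u1, u2, h01, h02, h12, heq⟩ := Finset.card_eq_three.mp (hcard e he)
    have hvs : D.verts = ({u0, u1, u2} : Set V) := by rw [hv, heq]; simp
    have hedge : D.edgeSet = {s(u0, u1), s(u0, u2), s(u1, u2)} := by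
      ext ε
      induction ε using Sym2.ind with
      | _ x y =>
      rw [SimpleGraph.Subgraph.mem_edgeSet, hadj x y, hvs]
      constructor
      · rintro ⟨hx, hy, hxy⟩
        rcases hx with rfl | rfl | rfl <;> rcases hy with rfl | rfl | rfl
        · exact absurd rfl hxy
        · exact Or.inl rfl
        · exact Or.inr (Or.inl rfl)
        · exact Or.inl Sym2.eq_swap
        · exact absurd rfl hxy
        · exact Or.inr (Or.inr rfl)
        · exact Or.inr (Or.inl Sym2.eq_swap)
        · exact Or.inr (Or.inr Sym2.eq_swap)
        · exact absurd rfl hxy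
      · intro h
        rcases h with h | h | h <;> rcases Sym2.eq_iff.mp h with ⟨rfl, rfl⟩ | ⟨rfl, rfl⟩
        · exact ⟨Or.inl rfl, Or.inr (Or.inl rfl), h01⟩
        · exact ⟨Or.inr (Or.inl rfl), Or.inl rfl, Ne.symm h01⟩
        · exact ⟨Or.inl rfl, Or.inr (Or.inr rfl), h02⟩
        · exact ⟨Or.inr (Or.inr rfl), Or.inl rfl, Ne.symm h02⟩
        · exact ⟨Or.inr (Or.inl rfl), Or.inr (Or.inr rfl), h12⟩
        · exact ⟨Or.inr (Or.inr rfl), Or.inr (Or.inl rfl), Ne.symm h12⟩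
    rw [hedge]
    apply Set.ncard_eq_three.mpr
    refine ⟨s(u0, u1), s(u0, u2), s(u1, u2), ?_, ?_, ?_, rfl⟩
    · intro h
      rcases Sym2.eq_iff.mp h with ⟨-, h'⟩ | ⟨h', -⟩
      · exact h12 h'
      · exact h02 h'
    · intro h
      rcases Sym2.eq_iff.mp h with ⟨h', -⟩ | ⟨h', -⟩
      · exact h01 h'
      · exact h02 h'
    · intro h
      rcases Sym2.eq_iff.mp h with ⟨h', -⟩ | ⟨h', -⟩
      · exact h01 h'
      · exact h02 h'
end

section
/- Let G be a finite simple graph with a universal vertex v. Then there exists a spanning subgraph H of G that is a cactus, has the maximum number of edges among all spanning cactus subgraphs of G, and in which every cycle is a triangle containing v. -/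
open SimpleGraph

namespace CactusProof

variable {V : Type*}

lemma Walk.getVert_cons_one {G : SimpleGraph V} {u v w : V} (h : G.Adj u v) (p : G.Walk v w) :
    (SimpleGraph.Walk.cons h p).getVert 1 = v := by
  cases p <;> rfl

lemma firstEdge_mem {G : SimpleGraph V} {a b : V} (p : G.Walk a b) (h : ¬ p.Nil) :
    s(a, p.getVert 1) ∈ p.edges := by
  cases p with
  | nil => simp at h
  | cons hadj q =>
    rw [Walk.getVert_cons_one]
    simp [Walk.edges_cons]

lemma getVert_one_append {G : SimpleGraph V} {a b c : V} (p : G.Walk a b) (q : G.Walk b c)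
    (h : ¬ p.Nil) : (p.append q).getVert 1 = p.getVert 1 := by
  rw [Walk.getVert_append]
  by_cases h1 : 1 < p.length
  · simp [h1]
  · have hl : p.length = 1 := by
      have := Walk.not_nil_iff_lt_length.mp h
      omega
    simp only [hl, lt_irrefl, if_false]
    rw [show (1 : ℕ) - 1 = 0 from rfl, Walk.getVert_zero, ← hl, Walk.getVert_length]

lemma path_neighbors_start {G : SimpleGraph V} {a b : V} (p : G.Walk a b) (hp : p.IsPath)
    (h : ¬ p.Nil) : {u | s(a, u) ∈ p.edges} = {p.getVert 1} := by
  cases p with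
  | nil => simp at h
  | @cons _ w _ hadj q =>
    rw [Walk.cons_isPath_iff] at hp
    ext u
    simp only [Walk.edges_cons, List.mem_cons, Set.mem_setOf_eq, Set.mem_singleton_iff,
      Walk.getVert_cons_one]
    constructor
    · rintro (hh | hh)
      · rcases Sym2.eq_iff.mp hh with ⟨-, rfl⟩ | ⟨h1, rfl⟩
        · rfl
        · exact absurd (h1 ▸ q.start_mem_support) hp.2
      · exact absurd (Walk.fst_mem_support_of_mem_edges q hh) hp.2
    · rintro rfl
      exact Or.inl rfl

lemma path_neighbors_internal {G : SimpleGraph V} {x : V} {a b : V} (p : G.Walk a b) :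
    p.IsPath → x ∈ p.support → x ≠ a → x ≠ b →
    ∃ y z, y ≠ z ∧ {u | s(x, u) ∈ p.edges} = {y, z} := by
  induction p with
  | nil =>
    intro _ hx hxa _
    simp only [Walk.support_nil, List.mem_singleton] at hx
    exact absurd hx hxa
  | @cons a a₁ _ hadj q ih =>
    intro hp hx hxa hxb
    rw [Walk.cons_isPath_iff] at hp
    have hxq : x ∈ q.support := by
      rcases List.mem_cons.mp (by simpa [Walk.support_cons] using hx) with h | h
      · exact absurd h hxa
      · exact h
    by_cases hx1 : x = a₁
    · subst hx1
      have hq : ¬ q.Nil := Walk.not_nil_of_ne hxb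
      have hA := path_neighbors_start q hp.1 hq
      refine ⟨a, q.getVert 1, ?_, ?_⟩
      · intro hcontra
        exact hp.2 (hcontra ▸ Walk.snd_mem_support_of_mem_edges q (firstEdge_mem q hq))
      · ext u
        simp only [Walk.edges_cons, List.mem_cons, Set.mem_setOf_eq, Set.mem_insert_iff,
          Set.mem_singleton_iff]
        constructor
        · rintro (hh | hh)
          · rcases Sym2.eq_iff.mp hh with ⟨h1, -⟩ | ⟨-, rfl⟩
            · exact absurd (h1 ▸ q.start_mem_support) hp.2
            · exact Or.inl rfl
          · right
            have hm : u ∈ {u | s(x, u) ∈ q.edges} := hh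
            rw [hA] at hm
            exact hm
        · rintro (rfl | rfl)
          · exact Or.inl (Sym2.eq_swap)
          · refine Or.inr ?_
            have hm : q.getVert 1 ∈ {u | s(x, u) ∈ q.edges} := by rw [hA]; rfl
            exact hm
    · obtain ⟨y, z, hyz, hset⟩ := ih hp.1 hxq hx1 hxb
      refine ⟨y, z, hyz, ?_⟩
      rw [← hset]
      ext u
      simp only [Walk.edges_cons, List.mem_cons, Set.mem_setOf_eq]
      constructor
      · rintro (hh | hh)
        · rcases Sym2.eq_iff.mp hh with ⟨h1, -⟩ | ⟨h1, -⟩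
          · exact absurd h1 hxa
          · exact absurd h1 hx1
        · exact hh
      · exact fun hh => Or.inr hh


lemma getVert_one_ne_end {G : SimpleGraph V} {a b : V} (p : G.Walk a b) (hp : p.IsPath)
    (hn : ¬ p.Nil) (he : s(a, b) ∉ p.edges) : p.getVert 1 ≠ b := by
  cases p with
  | nil => simp at hn
  | @cons _ w _ hadj q =>
    rw [Walk.getVert_cons_one]
    intro hcontra
    subst hcontra
    have hq : q = Walk.nil := Walk.isPath_iff_eq_nil.mp (((Walk.cons_isPath_iff _ _)).mp hp).1
    subst hq
    exact he (by simp)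

lemma cycle_cons_ncard {G : SimpleGraph V} {a b : V} (w : G.Walk a b) (hw : w.IsPath)
    (hba : G.Adj b a) (he : s(a, b) ∉ w.edges) :
    ∀ x ∈ (Walk.cons hba w).toSubgraph.verts,
      {u | (Walk.cons hba w).toSubgraph.Adj x u}.ncard = 2 := by
  have hab : a ≠ b := hba.ne'
  have hnil : ¬ w.Nil := Walk.not_nil_of_ne hab
  have hAdjset : ∀ x : V, {u | (Walk.cons hba w).toSubgraph.Adj x u}
      = {u | s(x, u) = s(b, a)} ∪ {u | s(x, u) ∈ w.edges} := by
    intro x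
    ext u
    rw [Set.mem_union, Set.mem_setOf_eq, Set.mem_setOf_eq, Set.mem_setOf_eq,
      ← Subgraph.mem_edgeSet, Walk.edgeSet_toSubgraph]
    simp [Walk.edges_cons]
  intro x hx
  rw [Walk.verts_toSubgraph] at hx
  simp only [Set.mem_setOf_eq, Walk.support_cons, List.mem_cons] at hx
  by_cases hxa : x = a
  · subst hxa
    have h1 : {u | s(x, u) = s(b, x)} = {b} := by
      ext u
      simp only [Set.mem_setOf_eq, Set.mem_singleton_iff]
      rw [Sym2.eq_iff]
      constructor
      · rintro (⟨h1, -⟩ | ⟨-, h2⟩)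
        · exact absurd h1 hab
        · exact h2
      · rintro rfl; exact Or.inr ⟨rfl, rfl⟩
    rw [hAdjset, h1, path_neighbors_start w hw hnil, Set.singleton_union]
    exact Set.ncard_pair (Ne.symm (getVert_one_ne_end w hw hnil he))
  · by_cases hxb : x = b
    · subst hxb
      have h1 : {u | s(x, u) = s(x, a)} = {a} := by
        ext u
        simp only [Set.mem_setOf_eq, Set.mem_singleton_iff, Sym2.congr_right]
      have hnil' : ¬ w.reverse.Nil := Walk.not_nil_of_ne (Ne.symm hab)
      have he' : s(x, a) ∉ w.reverse.edges := by
        rw [Walk.edges_reverse, List.mem_reverse, Sym2.eq_swap]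
        exact he
      have h2 : {u | s(x, u) ∈ w.edges} = {u | s(x, u) ∈ w.reverse.edges} := by
        ext u; rw [Set.mem_setOf_eq, Set.mem_setOf_eq, Walk.edges_reverse, List.mem_reverse]
      rw [hAdjset, h1, h2, path_neighbors_start w.reverse hw.reverse hnil',
        Set.singleton_union]
      exact Set.ncard_pair (Ne.symm (getVert_one_ne_end w.reverse hw.reverse hnil' he'))
    · have hxw : x ∈ w.support := by
        rcases hx with h | h
        · exact absurd h hxb
        · exact h
      have h1 : {u | s(x, u) = s(b, a)} = ∅ := by
        ext u
        simp only [Set.mem_setOf_eq, Set.mem_empty_iff_false, iff_false]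
        rw [Sym2.eq_iff]
        rintro (⟨h1, -⟩ | ⟨h1, -⟩)
        · exact hxb h1
        · exact hxa h1
      obtain ⟨y, z, hyz, hset⟩ := path_neighbors_internal w hw hxw hxa hxb
      rw [hAdjset, h1, Set.empty_union, hset]
      exact Set.ncard_pair hyz


lemma reachable_delete_of_not_bridge {G : SimpleGraph V} {x y : V}
    (hxy : G.Adj x y) (hnb : ¬ G.IsBridge s(x, y)) {c d : V} (p : G.Walk c d) :
    (G \ fromEdgeSet {s(x, y)}).Reachable c d := by
  have hr : (G \ fromEdgeSet {s(x, y)}).Reachable x y := by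
    by_contra hcon
    exact hnb (isBridge_iff.mpr hcon)
  induction p with
  | nil => exact Reachable.refl _
  | @cons c c₁ d h q ih =>
    refine Reachable.trans ?_ ih
    by_cases hcase : s(c, c₁) = s(x, y)
    · rcases Sym2.eq_iff.mp hcase with ⟨rfl, rfl⟩ | ⟨rfl, rfl⟩
      · exact hr
      · exact hr.symm
    · refine Adj.reachable ?_
      rw [sdiff_adj, fromEdgeSet_adj]
      exact ⟨h, fun hcon => hcase hcon.1⟩

lemma exists_spanning_tree [Fintype V] (K : SimpleGraph V) (hK : K.Connected) :
    ∃ T : SimpleGraph V, T ≤ K ∧ T.IsTree := by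
  classical
  let S : Set ℕ := {n | ∃ T : SimpleGraph V, T ≤ K ∧ T.Connected ∧ T.edgeSet.ncard = n}
  have hne : S.Nonempty := ⟨K.edgeSet.ncard, K, le_refl _, hK, rfl⟩
  obtain ⟨T, hTK, hTc, hTcard⟩ := Nat.sInf_mem hne
  refine ⟨T, hTK, hTc, ?_⟩
  by_contra hcyc
  rw [isAcyclic_iff_forall_adj_isBridge] at hcyc
  push_neg at hcyc
  obtain ⟨x, y, hxy, hnb⟩ := hcyc
  set T' := T \ fromEdgeSet {s(x, y)} with hT'
  have hT'conn : T'.Connected := by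
    rw [connected_iff]
    refine ⟨fun c d => ?_, hTc.nonempty⟩
    obtain ⟨p⟩ := hTc c d
    exact reachable_delete_of_not_bridge hxy hnb p
  have hT'edge : T'.edgeSet = T.edgeSet \ {s(x, y)} := by
    rw [hT', edgeSet_sdiff, edgeSet_fromEdgeSet, edgeSet_sdiff_sdiff_isDiag]
  have hlt : T'.edgeSet.ncard < T.edgeSet.ncard := by
    rw [hT'edge]
    refine Set.ncard_lt_ncard ?_ (Set.toFinite _)
    rw [Set.ssubset_iff_of_subset Set.diff_subset]
    exact ⟨s(x, y), by rw [mem_edgeSet]; exact hxy, by simp⟩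
  have hmem : T'.edgeSet.ncard ∈ S := ⟨T', le_trans sdiff_le hTK, hT'conn, rfl⟩
  have := Nat.sInf_le hmem
  omega

lemma tree_ncard [Fintype V] {T : SimpleGraph V} (h : T.IsTree) :
    T.edgeSet.ncard + 1 = Fintype.card V := by
  classical
  haveI : Fintype T.edgeSet := Fintype.ofFinite _
  rw [Set.ncard_eq_toFinset_card']
  have := h.card_edgeFinset
  rwa [show T.edgeFinset = T.edgeSet.toFinset from rfl] at this

lemma exists_first_hit {G : SimpleGraph V} {a v : V} (p : G.Walk a v) (S : Set V) (hv : v ∈ S) :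
    ∃ (t : V) (q : G.Walk a t) (r : G.Walk t v), p = q.append r ∧ t ∈ S ∧
      ∀ z ∈ q.support, z ∈ S → z = t := by
  revert hv
  induction p with
  | nil =>
    intro hv
    refine ⟨_, Walk.nil, Walk.nil, rfl, hv, ?_⟩
    intro z hz _
    simpa using hz
  | @cons c c₁ d h q ih =>
    intro hv
    by_cases hc : c ∈ S
    · refine ⟨c, Walk.nil, Walk.cons h q, rfl, hc, ?_⟩
      intro z hz _
      simpa using hz
    · obtain ⟨t, q', r, hdecomp, htS, hmin⟩ := ih hv
      refine ⟨t, Walk.cons h q', r, by rw [Walk.cons_append, hdecomp], htS, ?_⟩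
      intro z hz hzS
      rcases List.mem_cons.mp (by simpa [Walk.support_cons] using hz) with rfl | hz'
      · exact absurd hzS hc
      · exact hmin z hz' hzS


lemma mapLe_edges {G G' : SimpleGraph V} (h : G ≤ G') {a b : V} (p : G.Walk a b) :
    (p.mapLe h).edges = p.edges := by
  have hid : ⇑(Hom.ofLE h) = id := funext fun _ => rfl
  rw [Walk.mapLe, Walk.edges_map, hid, Sym2.map_id, List.map_id]

lemma getVert_one_eq_end {G : SimpleGraph V} {b t : V} (p : G.Walk b t) (hp : p.IsPath)
    (hn : ¬ p.Nil) (h1 : p.getVert 1 = t) : s(b, t) ∈ p.edges := by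
  cases p with
  | nil => simp at hn
  | @cons _ w _ hadj q =>
    rw [Walk.getVert_cons_one] at h1
    subst h1
    have hq : q = Walk.nil := Walk.isPath_iff_eq_nil.mp ((Walk.cons_isPath_iff _ _).mp hp).1
    subst hq
    simp


lemma cactus_count [Fintype V] (K : SimpleGraph V) (hKcact : IsCactus K) (v : V) :
    ∃ M : Set (Sym2 V), M ⊆ K.edgeSet ∧ (∀ e ∈ M, v ∉ e) ∧
      (∀ e ∈ M, ∀ f ∈ M, e ≠ f → ∀ x : V, x ∈ e → x ∉ f) ∧
      K.edgeSet.ncard = (Fintype.card V - 1) + M.ncard := by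
  classical
  obtain ⟨hKconn, hKcac⟩ := hKcact
  obtain ⟨T, hTK, hTree⟩ := exists_spanning_tree K hKconn
  have hUP := hTree.existsUnique_path
  choose pth hpth using fun x : V => (hUP x v).exists
  have huniq : ∀ (x : V) (R : T.Walk x v), R.IsPath → R = pth x :=
    fun x R hR => (hUP x v).unique hR (hpth x)
  set fe : V → Sym2 V := fun x => s(x, (pth x).getVert 1) with hfe
  have fe_spec : ∀ (x : V) (R : T.Walk x v), R.IsPath → fe x = s(x, R.getVert 1) := by
    intro x R hR
    rw [hfe]
    simp only []
    rw [huniq x R hR]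
  set D := K.edgeSet \ T.edgeSet with hD
  have key : ∀ e : Sym2 V, ∃ (C : K.Subgraph) (x y : V), e ∈ D →
      (IsCycleSubgraph C ∧ C.edgeSet ⊆ insert e T.edgeSet ∧ e ∈ C.edgeSet ∧
       x ≠ y ∧ x ≠ v ∧ y ≠ v ∧ s(x, y) ∈ C.edgeSet ∧ s(x, y) ∈ K.edgeSet ∧
       fe x ∈ C.edgeSet ∧ fe y ∈ C.edgeSet) := by
    intro e
    by_cases heD : e ∈ D
    · revert heD
      induction e using Sym2.ind with
      | _ a b =>
        intro heD
        have heK : K.Adj a b := by rw [← mem_edgeSet]; exact heD.1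
        have hnT : s(a, b) ∉ T.edgeSet := heD.2
        have hab : a ≠ b := heK.ne
        have hPa : (pth a).IsPath := hpth a
        have hPb : (pth b).IsPath := hpth b
        obtain ⟨t, q, r, hdec, htS, hmin⟩ :=
          exists_first_hit (pth a) {z | z ∈ (pth b).support} ((pth b).end_mem_support)
        have htb : t ∈ (pth b).support := htS
        have hqp : q.IsPath := Walk.IsPath.of_append_left (hdec ▸ hPa)
        have hrp : r.IsPath := Walk.IsPath.of_append_right (hdec ▸ hPa)
        set qb := (pth b).takeUntil t htb with hqb
        set rb := (pth b).dropUntil t htb with hrb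
        have hdecb : qb.append rb = pth b := (pth b).take_spec htb
        have hqbp : qb.IsPath := hPb.takeUntil htb
        have hrbp : rb.IsPath := hPb.dropUntil htb
        set w : T.Walk a b := q.append qb.reverse with hw
        have hnodPa : (q.support ++ r.support.tail).Nodup := by
          have h0 := hPa
          rw [hdec, Walk.isPath_def, Walk.support_append] at h0
          exact h0
        have hnodPb : (qb.support ++ rb.support.tail).Nodup := by
          have h0 := hPb
          rw [← hdecb, Walk.isPath_def, Walk.support_append] at h0
          exact h0
        have hwp : w.IsPath := by
          rw [Walk.isPath_def, hw, Walk.support_append, List.nodup_append']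
          refine ⟨hqp.support_nodup, ?_, ?_⟩
          · refine List.Sublist.nodup (List.tail_sublist _) ?_
            rw [Walk.support_reverse, List.nodup_reverse]
            exact hqbp.support_nodup
          · intro z hz hz'
            have hz2 : z ∈ qb.support := by
              have h0 := List.mem_of_mem_tail hz'
              rwa [Walk.support_reverse, List.mem_reverse] at h0
            have hzt : z = t := hmin z hz ((pth b).support_takeUntil_subset htb hz2)
            subst hzt
            have hrev : qb.reverse.support = z :: qb.reverse.support.tail :=
              qb.reverse.support_eq_cons
            have hnod : qb.reverse.support.Nodup := by
              rw [Walk.support_reverse, List.nodup_reverse]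
              exact hqbp.support_nodup
            rw [hrev] at hnod
            exact (List.nodup_cons.mp hnod).1 hz'
        have hwT : ∀ f ∈ w.edges, f ∈ T.edgeSet := fun f hf => w.edges_subset_edgeSet hf
        set w' : K.Walk a b := w.mapLe hTK with hw'
        have hw'p : w'.IsPath := (Walk.mapLe_isPath hTK).mpr hwp
        have hw'edges : w'.edges = w.edges := mapLe_edges hTK w
        have hew' : s(a, b) ∉ w'.edges := by
          rw [hw'edges]
          intro hcon
          exact hnT (hwT _ hcon)
        set c : K.Walk b b := Walk.cons heK.symm w' with hc
        have hcyc : c.IsCycle := by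
          refine Path.cons_isCycle ⟨w', hw'p⟩ heK.symm ?_
          rw [Sym2.eq_swap]
          exact hew'
        set C := c.toSubgraph with hC
        have hCyc : IsCycleSubgraph C := by
          refine ⟨c.toSubgraph_connected, ?_⟩
          exact cycle_cons_ncard w' hw'p heK.symm hew'
        have hCedge : C.edgeSet = {f | f ∈ c.edges} := Walk.edgeSet_toSubgraph c
        have hcEdges : c.edges = s(b, a) :: w'.edges := rfl
        have hwC : ∀ f ∈ w.edges, f ∈ C.edgeSet := by
          intro f hf
          rw [hCedge]
          show f ∈ c.edges
          rw [hcEdges]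
          exact List.mem_cons_of_mem _ (by rw [hw'edges]; exact hf)
        have heC : s(a, b) ∈ C.edgeSet := by
          rw [hCedge]
          show s(a, b) ∈ c.edges
          rw [hcEdges, Sym2.eq_swap]
          exact List.mem_cons_self
        have hCsub : C.edgeSet ⊆ insert s(a, b) T.edgeSet := by
          intro f hf
          rw [hCedge, Set.mem_setOf_eq, hcEdges] at hf
          rcases List.mem_cons.mp hf with h | h
          · left
            rw [h, Sym2.eq_swap]
          · right
            rw [hw'edges] at h
            exact hwT _ h
        have keyclaim : ∀ x, x ∈ w.support → x ≠ t → x ≠ v ∧ fe x ∈ w.edges := by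
          intro x hxw hxt
          rw [hw, Walk.mem_support_append_iff] at hxw
          rcases hxw with hxq | hxqb
          · have hxv : x ≠ v := by
              rintro rfl
              exact hxt (hmin x hxq ((pth b).end_mem_support))
            set R := q.dropUntil x hxq with hR
            have hRp : R.IsPath := hqp.dropUntil hxq
            have hRnil : ¬ R.Nil := Walk.not_nil_of_ne hxt
            have hWp : (R.append r).IsPath := by
              rw [Walk.isPath_def, Walk.support_append, List.nodup_append']
              refine ⟨hRp.support_nodup, (List.nodup_append'.mp hnodPa).2.1, ?_⟩
              intro z hz hz'
              exact (List.nodup_append'.mp hnodPa).2.2 (q.support_dropUntil_subset hxq hz) hz'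
            have hfex : fe x = s(x, (R.append r).getVert 1) := fe_spec x (R.append r) hWp
            rw [getVert_one_append _ _ hRnil] at hfex
            refine ⟨hxv, ?_⟩
            rw [hw, Walk.edges_append]
            refine List.mem_append_left _ ?_
            rw [hfex]
            exact q.edges_dropUntil_subset hxq (firstEdge_mem R hRnil)
          · have hxqb2 : x ∈ qb.support := by
              rwa [Walk.support_reverse, List.mem_reverse] at hxqb
            have hxv : x ≠ v := by
              intro hxv'
              by_cases htv : t = v
              · exact hxt (by rw [hxv', htv])
              · refine (List.nodup_append'.mp hnodPb).2.2 hxqb2 ?_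
                rw [hxv']
                exact Walk.end_mem_tail_support_of_ne htv rb
            set R := qb.dropUntil x hxqb2 with hR
            have hRp : R.IsPath := hqbp.dropUntil hxqb2
            have hRnil : ¬ R.Nil := Walk.not_nil_of_ne hxt
            have hWp : (R.append rb).IsPath := by
              rw [Walk.isPath_def, Walk.support_append, List.nodup_append']
              refine ⟨hRp.support_nodup, (List.nodup_append'.mp hnodPb).2.1, ?_⟩
              intro z hz hz'
              exact (List.nodup_append'.mp hnodPb).2.2 (qb.support_dropUntil_subset hxqb2 hz) hz'
            have hfex : fe x = s(x, (R.append rb).getVert 1) := fe_spec x (R.append rb) hWp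
            rw [getVert_one_append _ _ hRnil] at hfex
            refine ⟨hxv, ?_⟩
            rw [hw, Walk.edges_append]
            refine List.mem_append_right _ ?_
            rw [Walk.edges_reverse, List.mem_reverse, hfex]
            exact qb.edges_dropUntil_subset hxqb2 (firstEdge_mem R hRnil)
        by_cases hta : t = a
        · -- select first edge of qb
          have hbt : b ≠ t := by
            rw [hta]
            exact hab.symm
          have hqbnil : ¬ qb.Nil := Walk.not_nil_of_ne hbt
          set z := qb.getVert 1 with hz
          have hzmem : s(b, z) ∈ qb.edges := firstEdge_mem qb hqbnil
          have hzT : s(b, z) ∈ T.edgeSet := qb.edges_subset_edgeSet hzmem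
          have hbz : b ≠ z := by
            have h0 := hzT
            rw [mem_edgeSet] at h0
            exact h0.ne
          have hzt : z ≠ t := by
            intro hcon
            have := getVert_one_eq_end qb hqbp hqbnil (hz.symm.trans hcon)
            apply hnT
            have h2 : s(b, t) ∈ T.edgeSet := qb.edges_subset_edgeSet this
            rw [hta, Sym2.eq_swap] at h2
            exact h2
          have hzsup : z ∈ w.support := by
            rw [hw, Walk.mem_support_append_iff]
            right
            rw [Walk.support_reverse, List.mem_reverse]
            exact Walk.snd_mem_support_of_mem_edges qb hzmem
          have hbw : b ∈ w.support := w.end_mem_support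
          obtain ⟨hbv, hfeb⟩ := keyclaim b hbw hbt
          obtain ⟨hzv, hfez⟩ := keyclaim z hzsup hzt
          have hzwedge : s(b, z) ∈ w.edges := by
            rw [hw, Walk.edges_append]
            refine List.mem_append_right _ ?_
            rw [Walk.edges_reverse, List.mem_reverse]
            exact hzmem
          exact ⟨C, b, z, fun _ => ⟨hCyc, hCsub, heC, hbz, hbv, hzv, hwC _ hzwedge,
            edgeSet_mono hTK hzT, hwC _ hfeb, hwC _ hfez⟩⟩
        · by_cases htb2 : t = b
          · have hat : a ≠ t := by
              rw [htb2]
              exact hab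
            have hqnil : ¬ q.Nil := Walk.not_nil_of_ne hat
            set z := q.getVert 1 with hz
            have hzmem : s(a, z) ∈ q.edges := firstEdge_mem q hqnil
            have hzT : s(a, z) ∈ T.edgeSet := q.edges_subset_edgeSet hzmem
            have haz : a ≠ z := by
              have h0 := hzT
              rw [mem_edgeSet] at h0
              exact h0.ne
            have hzt : z ≠ t := by
              intro hcon
              have := getVert_one_eq_end q hqp hqnil (hz.symm.trans hcon)
              apply hnT
              have h2 : s(a, t) ∈ T.edgeSet := q.edges_subset_edgeSet this
              rw [htb2] at h2
              exact h2
            have hzsup : z ∈ w.support := by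
              rw [hw, Walk.mem_support_append_iff]
              left
              exact Walk.snd_mem_support_of_mem_edges q hzmem
            have haw : a ∈ w.support := w.start_mem_support
            obtain ⟨hav, hfea⟩ := keyclaim a haw hat
            obtain ⟨hzv, hfez⟩ := keyclaim z hzsup hzt
            have hzwedge : s(a, z) ∈ w.edges := by
              rw [hw, Walk.edges_append]
              exact List.mem_append_left _ hzmem
            exact ⟨C, a, z, fun _ => ⟨hCyc, hCsub, heC, haz, hav, hzv, hwC _ hzwedge,
              edgeSet_mono hTK hzT, hwC _ hfea, hwC _ hfez⟩⟩
          · have hat : a ≠ t := fun hcon => hta hcon.symm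
            have hbt : b ≠ t := fun hcon => htb2 hcon.symm
            obtain ⟨hav, hfea⟩ := keyclaim a w.start_mem_support hat
            obtain ⟨hbv, hfeb⟩ := keyclaim b w.end_mem_support hbt
            exact ⟨C, a, b, fun _ => ⟨hCyc, hCsub, heC, hab, hav, hbv, heC,
              heD.1, hwC _ hfea, hwC _ hfeb⟩⟩
    · exact ⟨⊥, v, v, fun h => absurd h heD⟩
  choose Cf xf yf hkey using key
  have hdisj : ∀ e ∈ D, ∀ f ∈ D, e ≠ f → ∀ z : V,
      (z = xf e ∨ z = yf e) → (z = xf f ∨ z = yf f) → False := by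
    intro e heD f hfD hef z hz1 hz2
    obtain ⟨hCyc1, hCsub1, hCe1, -, -, -, -, -, hfex1, hfey1⟩ := hkey e heD
    obtain ⟨hCyc2, hCsub2, hCe2, -, -, -, -, -, hfex2, hfey2⟩ := hkey f hfD
    have h1 : fe z ∈ (Cf e).edgeSet := by
      rcases hz1 with rfl | rfl
      exacts [hfex1, hfey1]
    have h2 : fe z ∈ (Cf f).edgeSet := by
      rcases hz2 with rfl | rfl
      exacts [hfex2, hfey2]
    have hCne : Cf e ≠ Cf f := by
      intro hcon
      have hfe2 : f ∈ (Cf e).edgeSet := hcon ▸ hCe2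
      rcases Set.mem_insert_iff.mp (hCsub1 hfe2) with h | h
      · exact hef h.symm
      · exact hfD.2 h
    exact hCne (hKcac (fe z) (Cf e) (Cf f) hCyc1 hCyc2 h1 h2)
  set sel : Sym2 V → Sym2 V := fun e => s(xf e, yf e) with hsel
  have hmemsel : ∀ (e : Sym2 V) (z : V), z ∈ sel e ↔ (z = xf e ∨ z = yf e) := by
    intro e z
    rw [hsel]
    exact Sym2.mem_iff
  have hinj : Set.InjOn sel D := by
    intro e heD f hfD hef
    by_contra hne
    have : xf e ∈ sel f := by
      rw [← hef, hmemsel]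
      exact Or.inl rfl
    rw [hmemsel] at this
    exact hdisj e heD f hfD hne (xf e) (Or.inl rfl) this
  refine ⟨sel '' D, ?_, ?_, ?_, ?_⟩
  · rintro - ⟨e, heD, rfl⟩
    exact (hkey e heD).2.2.2.2.2.2.2.1
  · rintro - ⟨e, heD, rfl⟩ hv
    rw [hmemsel] at hv
    obtain ⟨-, -, -, -, hxv, hyv, -, -, -, -⟩ := hkey e heD
    rcases hv with rfl | rfl
    · exact hxv rfl
    · exact hyv rfl
  · rintro - ⟨e, heD, rfl⟩ - ⟨f, hfD, rfl⟩ hne z hz1 hz2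
    have hef : e ≠ f := by
      rintro rfl
      exact hne rfl
    rw [hmemsel] at hz1 hz2
    exact hdisj e heD f hfD hef z hz1 hz2
  · have h1 : (sel '' D).ncard = D.ncard := Set.ncard_image_of_injOn hinj
    have h2 : T.edgeSet ⊆ K.edgeSet := edgeSet_mono hTK
    have h3 : (K.edgeSet \ T.edgeSet).ncard + T.edgeSet.ncard = K.edgeSet.ncard :=
      Set.ncard_diff_add_ncard_of_subset h2 (Set.toFinite _)
    have h4 := tree_ncard hTree
    rw [h1]
    rw [hD]
    omega


def starMatch (v : V) (M : Set (Sym2 V)) : SimpleGraph V where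
  Adj a b := a ≠ b ∧ (a = v ∨ b = v ∨ s(a, b) ∈ M)
  symm := by
    constructor
    rintro a b ⟨hne, h⟩
    refine ⟨hne.symm, ?_⟩
    rcases h with h | h | h
    · exact Or.inr (Or.inl h)
    · exact Or.inl h
    · exact Or.inr (Or.inr (Sym2.eq_swap ▸ h))
  loopless := ⟨fun a h => h.1 rfl⟩

lemma starMatch_adj {v : V} {M : Set (Sym2 V)} {a b : V} :
    (starMatch v M).Adj a b ↔ a ≠ b ∧ (a = v ∨ b = v ∨ s(a, b) ∈ M) := Iff.rfl

lemma starMatch_le {G : SimpleGraph V} {v : V} {M : Set (Sym2 V)}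
    (hM : M ⊆ G.edgeSet) (hv : ∀ u : V, u ≠ v → G.Adj v u) : starMatch v M ≤ G := by
  rintro a b ⟨hne, h⟩
  rcases h with rfl | rfl | h
  · exact hv b (Ne.symm hne)
  · exact (hv a hne).symm
  · rw [← mem_edgeSet]
    exact hM h

lemma starMatch_connected (v : V) (M : Set (Sym2 V)) : (starMatch v M).Connected := by
  rw [connected_iff]
  refine ⟨?_, ⟨v⟩⟩
  have hreach : ∀ a : V, (starMatch v M).Reachable a v := by
    intro a
    by_cases hav : a = v
    · rw [hav]
    · exact Adj.reachable ⟨hav, Or.inr (Or.inl rfl)⟩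
  intro a b
  exact (hreach a).trans (hreach b).symm

lemma starMatch_cycle {G : SimpleGraph V} {v : V} {M : Set (Sym2 V)}
    (hM : M ⊆ G.edgeSet) (hMv : ∀ e ∈ M, v ∉ e)
    (hMd : ∀ e ∈ M, ∀ f ∈ M, e ≠ f → ∀ x : V, x ∈ e → x ∉ f)
    (C : (starMatch v M).Subgraph) (hC : IsCycleSubgraph C) :
    ∃ a b : V, a ≠ b ∧ a ≠ v ∧ b ≠ v ∧ s(a, b) ∈ M ∧ C.verts = {v, a, b} ∧
      (∀ x y, C.Adj x y ↔ (x ≠ y ∧ x ∈ C.verts ∧ y ∈ C.verts)) ∧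
      C.edgeSet = {s(v, a), s(v, b), s(a, b)} := by
  classical
  have hsub : ∀ {x u : V}, C.Adj x u → x ≠ u ∧ (x = v ∨ u = v ∨ s(x, u) ∈ M) :=
    fun h => C.adj_sub h
  have step1 : ∀ x ∈ C.verts, x ≠ v →
      ∃ w, w ≠ v ∧ s(x, w) ∈ M ∧ {u | C.Adj x u} = {v, w} := by
    intro x hx hxv
    obtain ⟨u1, u2, hne, hset⟩ := Set.ncard_eq_two.mp (hC.2 x hx)
    have hu1 : C.Adj x u1 := by
      have : u1 ∈ {u | C.Adj x u} := by
        rw [hset]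
        exact Set.mem_insert _ _
      exact this
    have hu2 : C.Adj x u2 := by
      have : u2 ∈ {u | C.Adj x u} := by
        rw [hset]
        exact Set.mem_insert_iff.mpr (Or.inr rfl)
      exact this
    have hmem : ∀ u, C.Adj x u → u = v ∨ s(x, u) ∈ M := by
      intro u hu
      rcases (hsub hu).2 with h | h | h
      · exact absurd h hxv
      · exact Or.inl h
      · exact Or.inr h
    have hM1 : ∀ u u', s(x, u) ∈ M → s(x, u') ∈ M → u = u' := by
      intro u u' h1 h1'
      by_contra hne2
      have hedne : s(x, u) ≠ s(x, u') := fun hcon => hne2 (Sym2.congr_right.mp hcon)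
      exact (hMd _ h1 _ h1' hedne x (Sym2.mem_mk_left x u)) (Sym2.mem_mk_left x u')
    have hwne : ∀ w, s(x, w) ∈ M → w ≠ v := by
      intro w hw hcon
      exact hMv _ hw (hcon ▸ Sym2.mem_mk_right x w)
    by_cases h1v : u1 = v
    · rcases hmem u2 hu2 with h | h
      · exact absurd (h1v.trans h.symm) hne
      · exact ⟨u2, hwne _ h, h, by rw [hset, h1v]⟩
    · rcases hmem u1 hu1 with h | h
      · exact absurd h h1v
      · rcases hmem u2 hu2 with h2 | h2
        · exact ⟨u1, h1v, h, by rw [hset, h2, Set.pair_comm]⟩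
        · exact absurd (hM1 _ _ h h2) hne
  obtain ⟨x0, hx0⟩ := ((C.connected_iff).mp hC.1).2
  have hex : ∃ a ∈ C.verts, a ≠ v := by
    by_contra hall
    push_neg at hall
    have hvmem : v ∈ C.verts := (hall x0 hx0) ▸ hx0
    have hempty : {u | C.Adj v u} = ∅ := by
      ext u
      simp only [Set.mem_setOf_eq, Set.mem_empty_iff_false, iff_false]
      intro h
      have huv : u = v := hall u h.snd_mem
      exact (hsub h).1 (huv.symm)
    have h2 := hC.2 v hvmem
    rw [hempty] at h2
    simp at h2
  obtain ⟨a, ha, hav⟩ := hex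
  obtain ⟨b, hbv, habM, hNa⟩ := step1 a ha hav
  have hCab : C.Adj a b := by
    have : b ∈ {u | C.Adj a u} := by
      rw [hNa]
      exact Set.mem_insert_iff.mpr (Or.inr rfl)
    exact this
  have hCav : C.Adj a v := by
    have : v ∈ {u | C.Adj a u} := by
      rw [hNa]
      exact Set.mem_insert _ _
    exact this
  have haneb : a ≠ b := (hsub hCab).1
  have hb : b ∈ C.verts := hCab.snd_mem
  have hvmem : v ∈ C.verts := hCav.snd_mem
  obtain ⟨b', hb'v, hbb', hNb⟩ := step1 b hb hbv
  have hb'a : b' = a := by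
    have hmem : a ∈ {u | C.Adj b u} := hCab.symm
    rw [hNb] at hmem
    rcases hmem with h | h
    · exact absurd h hav
    · exact h.symm
  rw [hb'a] at hNb hbb'
  have hCbv : C.Adj b v := by
    have : v ∈ {u | C.Adj b u} := by
      rw [hNb]
      exact Set.mem_insert _ _
    exact this
  have hva : C.Adj v a := hCav.symm
  have hvb : C.Adj v b := hCbv.symm
  have hNv : {u | C.Adj v u} = {a, b} := by
    obtain ⟨c, d, hcd, hset⟩ := Set.ncard_eq_two.mp (hC.2 v hvmem)
    rw [hset]
    have hain : a ∈ ({c, d} : Set V) := by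
      rw [← hset]
      exact hva
    have hbin : b ∈ ({c, d} : Set V) := by
      rw [← hset]
      exact hvb
    rcases hain with rfl | rfl <;> rcases hbin with h | h
    · exact absurd h.symm haneb
    · rw [h]
    · rw [h, Set.pair_comm]
    · exact absurd (h.trans rfl) (Ne.symm haneb)
  have hverts : C.verts = {v, a, b} := by
    ext x
    constructor
    · intro hx
      by_cases hxv : x = v
      · exact Or.inl hxv
      · obtain ⟨w, -, -, hNx⟩ := step1 x hx hxv
        have hxvadj : C.Adj x v := by
          have : v ∈ {u | C.Adj x u} := by
            rw [hNx]
            exact Set.mem_insert _ _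
          exact this
        have : x ∈ {u | C.Adj v u} := hxvadj.symm
        rw [hNv] at this
        rcases this with rfl | rfl
        · exact Or.inr (Or.inl rfl)
        · exact Or.inr (Or.inr rfl)
    · rintro (rfl | rfl | rfl) <;> assumption
  have hAdjiff : ∀ x y, C.Adj x y ↔ (x ≠ y ∧ x ∈ C.verts ∧ y ∈ C.verts) := by
    intro x y
    constructor
    · intro h
      exact ⟨(hsub h).1, h.fst_mem, h.snd_mem⟩
    · rintro ⟨hxy, hx, hy⟩
      rw [hverts] at hx hy
      rcases hx with rfl | rfl | rfl <;> rcases hy with rfl | rfl | rfl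
      · exact absurd rfl hxy
      · exact hva
      · exact hvb
      · exact hCav
      · exact absurd rfl hxy
      · exact hCab
      · exact hCbv
      · exact hCab.symm
      · exact absurd rfl hxy
  refine ⟨a, b, haneb, hav, hbv, habM, hverts, hAdjiff, ?_⟩
  ext f
  induction f using Sym2.ind with
  | _ x y =>
    rw [Subgraph.mem_edgeSet, hAdjiff x y, hverts]
    constructor
    · rintro ⟨hxy, hx, hy⟩
      rcases hx with rfl | rfl | rfl <;> rcases hy with rfl | rfl | rfl
      · exact absurd rfl hxy
      · exact Or.inl rfl
      · exact Or.inr (Or.inl rfl)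
      · exact Or.inl (Sym2.eq_swap)
      · exact absurd rfl hxy
      · exact Or.inr (Or.inr rfl)
      · exact Or.inr (Or.inl (Sym2.eq_swap))
      · exact Or.inr (Or.inr (Sym2.eq_swap))
      · exact absurd rfl hxy
    · rintro (h | h | h)
      · rcases Sym2.eq_iff.mp h with ⟨rfl, rfl⟩ | ⟨rfl, rfl⟩
        · exact ⟨Ne.symm hav, Or.inl rfl, Or.inr (Or.inl rfl)⟩
        · exact ⟨hav, Or.inr (Or.inl rfl), Or.inl rfl⟩
      · rcases Sym2.eq_iff.mp h with ⟨rfl, rfl⟩ | ⟨rfl, rfl⟩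
        · exact ⟨Ne.symm hbv, Or.inl rfl, Or.inr (Or.inr rfl)⟩
        · exact ⟨hbv, Or.inr (Or.inr rfl), Or.inl rfl⟩
      · rcases Sym2.eq_iff.mp h with ⟨rfl, rfl⟩ | ⟨rfl, rfl⟩
        · exact ⟨haneb, Or.inr (Or.inl rfl), Or.inr (Or.inr rfl)⟩
        · exact ⟨Ne.symm haneb, Or.inr (Or.inr rfl), Or.inr (Or.inl rfl)⟩


lemma starMatch_edgeSet {v : V} {M : Set (Sym2 V)} (hMdiag : ∀ e ∈ M, ¬ e.IsDiag) :
    (starMatch v M).edgeSet = ((fun u => s(v, u)) '' {u | u ≠ v}) ∪ M := by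
  ext f
  induction f using Sym2.ind with
  | _ x y =>
    rw [mem_edgeSet, starMatch_adj]
    constructor
    · rintro ⟨hxy, rfl | rfl | h⟩
      · exact Or.inl ⟨y, Ne.symm hxy, rfl⟩
      · exact Or.inl ⟨x, hxy, Sym2.eq_swap⟩
      · exact Or.inr h
    · rintro (⟨u, hu, heq⟩ | h)
      · rcases Sym2.eq_iff.mp heq with ⟨rfl, rfl⟩ | ⟨rfl, rfl⟩
        · exact ⟨Ne.symm hu, Or.inl rfl⟩
        · exact ⟨hu, Or.inr (Or.inl rfl)⟩
      · refine ⟨?_, Or.inr (Or.inr h)⟩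
        intro hcon
        exact hMdiag _ h (Sym2.mk_isDiag_iff.mpr hcon)

lemma starMatch_ncard [Fintype V] {v : V} {M : Set (Sym2 V)}
    (hMdiag : ∀ e ∈ M, ¬ e.IsDiag) (hMv : ∀ e ∈ M, v ∉ e) :
    (starMatch v M).edgeSet.ncard = (Fintype.card V - 1) + M.ncard := by
  classical
  rw [starMatch_edgeSet hMdiag]
  have hdisj : Disjoint ((fun u => s(v, u)) '' {u | u ≠ v}) M := by
    rw [Set.disjoint_left]
    rintro f ⟨u, hu, rfl⟩ hfM
    exact hMv _ hfM (Sym2.mem_mk_left v u)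
  rw [Set.ncard_union_eq hdisj (Set.toFinite _) (Set.toFinite _)]
  congr 1
  have hinj : Set.InjOn (fun u => s(v, u)) {u | u ≠ v} := by
    intro u1 _ u2 _ heq
    exact Sym2.congr_right.mp heq
  rw [Set.ncard_image_of_injOn hinj]
  have hcompl : {u : V | u ≠ v} = ({v} : Set V)ᶜ := by
    ext u
    simp [Set.mem_compl_iff]
  rw [hcompl]
  have h1 := Set.ncard_add_ncard_compl ({v} : Set V)
  rw [Set.ncard_singleton, Nat.card_eq_fintype_card] at h1
  omega

lemma starMatch_cactus {G : SimpleGraph V} {v : V} {M : Set (Sym2 V)}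
    (hM : M ⊆ G.edgeSet) (hMv : ∀ e ∈ M, v ∉ e)
    (hMd : ∀ e ∈ M, ∀ f ∈ M, e ≠ f → ∀ x : V, x ∈ e → x ∉ f) :
    IsCactus (starMatch v M) := by
  refine ⟨starMatch_connected v M, ?_⟩
  intro e C₁ C₂ h1 h2 he1 he2
  obtain ⟨a, b, hab, hav, hbv, habM, hverts1, hadj1, hedge1⟩ :=
    starMatch_cycle hM hMv hMd C₁ h1
  obtain ⟨a', b', hab', ha'v, hb'v, habM', hverts2, hadj2, hedge2⟩ :=
    starMatch_cycle hM hMv hMd C₂ h2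
  have huniqM : ∀ x y y' : V, s(x, y) ∈ M → s(x, y') ∈ M → y = y' := by
    intro x y y' hy hy'
    by_contra hne
    exact (hMd _ hy _ hy' (fun hcon => hne (Sym2.congr_right.mp hcon)) x
      (Sym2.mem_mk_left x y)) (Sym2.mem_mk_left x y')
  have hvnotM : ∀ x y : V, s(x, y) ∈ M → v ≠ x ∧ v ≠ y := by
    intro x y h
    constructor
    · rintro rfl
      exact hMv _ h (Sym2.mem_mk_left _ _)
    · rintro rfl
      exact hMv _ h (Sym2.mem_mk_right _ _)
  have hpair : (a = a' ∧ b = b') ∨ (a = b' ∧ b = a') := by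
    rw [hedge1] at he1
    rw [hedge2] at he2
    rcases he1 with h | h | h <;> rcases he2 with h' | h' | h'
    · have haa : a = a' := Sym2.congr_right.mp (h.symm.trans h')
      subst haa
      exact Or.inl ⟨rfl, huniqM a b b' habM habM'⟩
    · have hab2 : a = b' := Sym2.congr_right.mp (h.symm.trans h')
      subst hab2
      refine Or.inr ⟨rfl, huniqM a b a' habM ?_⟩
      rw [Sym2.eq_swap]
      exact habM'
    · exfalso
      have : v ∈ s(a', b') := by
        rw [← h', h]
        exact Sym2.mem_mk_left v a
      rcases Sym2.mem_iff.mp this with rfl | rfl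
      · exact ha'v rfl
      · exact hb'v rfl
    · have hba : b = a' := Sym2.congr_right.mp (h.symm.trans h')
      subst hba
      refine Or.inr ⟨huniqM b a b' ?_ habM', rfl⟩
      rw [Sym2.eq_swap]
      exact habM
    · have hbb : b = b' := Sym2.congr_right.mp (h.symm.trans h')
      subst hbb
      refine Or.inl ⟨?_, rfl⟩
      have h1' : s(b, a) ∈ M := by rw [Sym2.eq_swap]; exact habM
      have h2' : s(b, a') ∈ M := by rw [Sym2.eq_swap]; exact habM'
      exact huniqM b a a' h1' h2'
    · exfalso
      have : v ∈ s(a', b') := by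
        rw [← h']
        exact h ▸ Sym2.mem_mk_left v b
      rcases Sym2.mem_iff.mp this with rfl | rfl
      · exact ha'v rfl
      · exact hb'v rfl
    · exfalso
      have : v ∈ s(a, b) := by
        rw [← h]
        exact h' ▸ Sym2.mem_mk_left v a'
      rcases Sym2.mem_iff.mp this with rfl | rfl
      · exact hav rfl
      · exact hbv rfl
    · exfalso
      have : v ∈ s(a, b) := by
        rw [← h]
        exact h' ▸ Sym2.mem_mk_left v b'
      rcases Sym2.mem_iff.mp this with rfl | rfl
      · exact hav rfl
      · exact hbv rfl
    · have heq : s(a, b) = s(a', b') := h.symm.trans h'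
      rcases Sym2.eq_iff.mp heq with ⟨h1', h2'⟩ | ⟨h1', h2'⟩
      · exact Or.inl ⟨h1', h2'⟩
      · exact Or.inr ⟨h1', h2'⟩
  have hverteq : C₁.verts = C₂.verts := by
    rw [hverts1, hverts2]
    rcases hpair with ⟨rfl, rfl⟩ | ⟨rfl, rfl⟩
    · rfl
    · congr 1
      exact Set.pair_comm _ _
  refine Subgraph.ext hverteq ?_
  funext x y
  apply propext
  rw [hadj1, hadj2, hverteq]

end CactusProof

/-- If `G` is a finite graph with a universal vertex `v`, then `G` has a spanning
cactus subgraph `H` with the maximum number of edges among all spanning cactus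
subgraphs of `G` in which every cycle is a triangle containing `v`. -/
theorem universal_vertex_max_spanning_cactus {V : Type*} [Fintype V]
    (G : SimpleGraph V) (v : V) (hv : ∀ u : V, u ≠ v → G.Adj v u) :
    ∃ H : SimpleGraph V, H ≤ G ∧ IsCactus H ∧
      (∀ K : SimpleGraph V, K ≤ G → IsCactus K →
        K.edgeSet.ncard ≤ H.edgeSet.ncard) ∧
      ∀ C : H.Subgraph, IsCycleSubgraph C →
        C.edgeSet.ncard = 3 ∧ v ∈ C.verts := by
  classical
  set 𝒜 : Set (Set (Sym2 V)) := {M | M ⊆ G.edgeSet ∧ (∀ e ∈ M, v ∉ e) ∧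
    (∀ e ∈ M, ∀ f ∈ M, e ≠ f → ∀ x : V, x ∈ e → x ∉ f)} with h𝒜
  have h𝒜ne : 𝒜.Nonempty := ⟨∅, by simp [h𝒜]⟩
  obtain ⟨M, hM𝒜, hMmax'⟩ :=
    Set.Finite.exists_maximalFor Set.ncard 𝒜 (Set.toFinite _) h𝒜ne
  have hMmax : ∀ M' ∈ 𝒜, M'.ncard ≤ M.ncard := by
    intro M' hM'
    by_contra hlt
    push_neg at hlt
    have := hMmax' hM' (le_of_lt hlt)
    omega
  obtain ⟨hMG, hMv, hMd⟩ := hM𝒜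
  have hMdiag : ∀ e ∈ M, ¬ e.IsDiag := fun e he => G.not_isDiag_of_mem_edgeSet (hMG he)
  refine ⟨CactusProof.starMatch v M, CactusProof.starMatch_le hMG hv,
    CactusProof.starMatch_cactus hMG hMv hMd, ?_, ?_⟩
  · intro K hKG hKcact
    obtain ⟨MK, hMK1, hMK2, hMK3, hMK4⟩ := CactusProof.cactus_count K hKcact v
    have hMK𝒜 : MK ∈ 𝒜 := ⟨subset_trans hMK1 (edgeSet_mono hKG), hMK2, hMK3⟩
    have hle := hMmax MK hMK𝒜
    rw [hMK4, CactusProof.starMatch_ncard hMdiag hMv]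
    omega
  · intro C hC
    obtain ⟨a, b, hab, hav, hbv, habM, hverts, hadj, hedge⟩ :=
      CactusProof.starMatch_cycle hMG hMv hMd C hC
    constructor
    · rw [hedge]
      have h1 : s(v, a) ≠ s(v, b) := fun hcon => hab (Sym2.congr_right.mp hcon)
      have h2 : s(v, a) ≠ s(a, b) := by
        intro hcon
        have hm : v ∈ s(a, b) := hcon ▸ Sym2.mem_mk_left v a
        rcases Sym2.mem_iff.mp hm with rfl | rfl
        · exact hav rfl
        · exact hbv rfl
      have h3 : s(v, b) ≠ s(a, b) := by
        intro hcon
        have hm : v ∈ s(a, b) := hcon ▸ Sym2.mem_mk_left v b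
        rcases Sym2.mem_iff.mp hm with rfl | rfl
        · exact hav rfl
        · exact hbv rfl
      rw [Set.ncard_insert_of_notMem (by simp [h1, h2]) (Set.toFinite _),
        Set.ncard_insert_of_notMem (by simp [h3]) (Set.toFinite _), Set.ncard_singleton]
    · rw [hverts]
      exact Set.mem_insert _ _
end
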